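/- arXiv:math/0409210 — 4 statements merged into one kernel-verified Lean document; each statement's English description precedes it below -/
import Mathlib

section
/- Let n ≥ 3, let P_j(z) = z_j(z₁ + 2z₂ + 3z₃ − j) for j = 1, 2, 3, and define u(z) = (1/2) log(|P₁(z)|² + |P₂(z)|² + |P₃(z)|² + Σ_{k=4}^{n} |z_k|²) for z ∈ ℂⁿ. Then limsup_{‖z‖ → ∞} u(z)/log‖z‖ = 2. -/
open Filter Real

noncomputable def EGS3F (n : ℕ) (hn : 3 ≤ n) (z : EuclideanSpace ℂ (Fin n)) : ℝ :=
  (∑ j : Fin 3,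
      ‖z (Fin.castLE hn j) *
        (z (Fin.castLE hn 0) + 2 * z (Fin.castLE hn 1) + 3 * z (Fin.castLE hn 2)
          - (((j : ℕ) : ℂ) + 1))‖ ^ 2) +
    ∑ k : Fin n, if 3 ≤ (k : ℕ) then ‖z k‖ ^ 2 else 0

lemma EGS3F_nonneg (n : ℕ) (hn : 3 ≤ n) (z : EuclideanSpace ℂ (Fin n)) : 0 ≤ EGS3F n hn z := by
  unfold EGS3F
  have h1 : (0:ℝ) ≤ ∑ j : Fin 3,
      ‖z (Fin.castLE hn j) *
        (z (Fin.castLE hn 0) + 2 * z (Fin.castLE hn 1) + 3 * z (Fin.castLE hn 2)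
          - (((j : ℕ) : ℂ) + 1))‖ ^ 2 := by positivity
  have h2 : (0:ℝ) ≤ ∑ k : Fin n, if 3 ≤ (k : ℕ) then ‖z k‖ ^ 2 else 0 := by
    apply Finset.sum_nonneg; intro k _; split <;> positivity
  linarith

lemma euclid_coord_le (n : ℕ) (z : EuclideanSpace ℂ (Fin n)) (i : Fin n) : ‖z i‖ ≤ ‖z‖ := by
  have h2 : ‖z i‖^2 ≤ ‖z‖^2 := by
    rw [EuclideanSpace.norm_eq, Real.sq_sqrt (by positivity)]
    exact Finset.single_le_sum (f := fun i => ‖z i‖^2) (fun i _ => by positivity) (Finset.mem_univ i)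
  exact (abs_le_of_sq_le_sq' h2 (norm_nonneg _)).2

lemma EGS3F_le (n : ℕ) (hn : 3 ≤ n) (z : EuclideanSpace ℂ (Fin n)) (hz : 1 ≤ ‖z‖) :
    EGS3F n hn z ≤ 244 * ‖z‖ ^ 4 := by
  have hc := euclid_coord_le n z
  have hz0 : (0:ℝ) ≤ ‖z‖ := le_trans zero_le_one hz
  have hL : ∀ j : Fin 3,
      ‖z (Fin.castLE hn 0) + 2 * z (Fin.castLE hn 1) + 3 * z (Fin.castLE hn 2)
        - (((j : ℕ) : ℂ) + 1)‖ ≤ 9 * ‖z‖ := by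
    intro j
    have hj : ‖(((j : ℕ) : ℂ) + 1)‖ ≤ 3 := by
      calc ‖(((j : ℕ) : ℂ) + 1)‖ ≤ ‖((j:ℕ):ℂ)‖ + ‖(1:ℂ)‖ := norm_add_le _ _
        _ = (j:ℕ) + 1 := by simp [Complex.norm_natCast]
        _ ≤ 3 := by have h3 : (j:ℕ) + 1 ≤ 3 := j.is_lt; exact_mod_cast h3
    calc ‖z (Fin.castLE hn 0) + 2 * z (Fin.castLE hn 1) + 3 * z (Fin.castLE hn 2)
          - (((j : ℕ) : ℂ) + 1)‖
        ≤ ‖z (Fin.castLE hn 0) + 2 * z (Fin.castLE hn 1) + 3 * z (Fin.castLE hn 2)‖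
            + ‖(((j : ℕ) : ℂ) + 1)‖ := norm_sub_le _ _
      _ ≤ (‖z (Fin.castLE hn 0)‖ + ‖2 * z (Fin.castLE hn 1)‖ + ‖3 * z (Fin.castLE hn 2)‖) + 3 := by
          gcongr; exact norm_add₃_le
      _ ≤ (‖z‖ + 2*‖z‖ + 3*‖z‖) + 3*‖z‖ := by
          rw [norm_mul, norm_mul]
          simp only [Complex.norm_ofNat]
          gcongr <;> first | exact hc _ | linarith
      _ = 9 * ‖z‖ := by ring
  have hterm : ∀ j : Fin 3,
      ‖z (Fin.castLE hn j) *
        (z (Fin.castLE hn 0) + 2 * z (Fin.castLE hn 1) + 3 * z (Fin.castLE hn 2)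
          - (((j : ℕ) : ℂ) + 1))‖ ^ 2 ≤ 81 * ‖z‖^4 := by
    intro j
    rw [norm_mul]
    calc (‖z (Fin.castLE hn j)‖ * ‖_‖)^2 ≤ (‖z‖ * (9 * ‖z‖))^2 := by
          gcongr
          · exact hc _
          · exact hL j
      _ = 81 * ‖z‖^4 := by ring
  have htail : (∑ k : Fin n, if 3 ≤ (k : ℕ) then ‖z k‖ ^ 2 else 0) ≤ ‖z‖^2 := by
    calc (∑ k : Fin n, if 3 ≤ (k : ℕ) then ‖z k‖ ^ 2 else 0) ≤ ∑ k : Fin n, ‖z k‖^2 := by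
          apply Finset.sum_le_sum; intro k _; split; · exact le_rfl
          · positivity
      _ = ‖z‖^2 := by rw [EuclideanSpace.norm_eq, Real.sq_sqrt (by positivity)]
  have hsum : (∑ j : Fin 3,
      ‖z (Fin.castLE hn j) *
        (z (Fin.castLE hn 0) + 2 * z (Fin.castLE hn 1) + 3 * z (Fin.castLE hn 2)
          - (((j : ℕ) : ℂ) + 1))‖ ^ 2) ≤ 243 * ‖z‖^4 := by
    calc _ ≤ ∑ _j : Fin 3, 81 * ‖z‖^4 := Finset.sum_le_sum (fun j _ => hterm j)
      _ = 243 * ‖z‖^4 := by simp; ring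
  have h24 : ‖z‖^2 ≤ ‖z‖^4 := by nlinarith [sq_nonneg (‖z‖^2 - ‖z‖), sq_nonneg ‖z‖]
  unfold EGS3F
  linarith

lemma EGS3_upper (n : ℕ) (hn : 3 ≤ n) (c : ℝ) (hc : 2 < c) :
    ∀ᶠ z in (Filter.comap (fun z : EuclideanSpace ℂ (Fin n) => ‖z‖) Filter.atTop),
      ((1:ℝ)/2) * Real.log (EGS3F n hn z) / Real.log ‖z‖ ≤ c := by
  set R : ℝ := max 2 (Real.exp ((Real.log 244)/(2*(c-2)))) with hR
  have key : ∀ z : EuclideanSpace ℂ (Fin n), R ≤ ‖z‖ →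
      ((1:ℝ)/2) * Real.log (EGS3F n hn z) / Real.log ‖z‖ ≤ c := by
    intro z hz
    have hz2 : (2:ℝ) ≤ ‖z‖ := le_trans (le_max_left _ _) hz
    have hlogz : 0 < Real.log ‖z‖ := Real.log_pos (by linarith)
    have hlogR : Real.log 244 / (2*(c-2)) ≤ Real.log ‖z‖ :=
      (Real.le_log_iff_exp_le (by linarith)).mpr (le_trans (le_max_right _ _) hz)
    rw [div_le_iff₀ hlogz]
    rcases eq_or_lt_of_le (EGS3F_nonneg n hn z) with h | h
    · rw [← h, Real.log_zero, mul_zero]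
      positivity
    · have hFle : Real.log (EGS3F n hn z) ≤ Real.log 244 + 4 * Real.log ‖z‖ := by
        calc Real.log (EGS3F n hn z) ≤ Real.log (244 * ‖z‖^4) :=
              Real.log_le_log h (EGS3F_le n hn z (by linarith))
          _ = Real.log 244 + 4 * Real.log ‖z‖ := by
              rw [Real.log_mul (by norm_num) (by positivity), Real.log_pow]
              norm_num
      have h2c : Real.log 244 ≤ 2*(c-2) * Real.log ‖z‖ := by
        rw [div_le_iff₀ (by linarith)] at hlogR
        linarith [hlogR]
      nlinarith [hlogz]
  rw [Filter.eventually_comap]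
  filter_upwards [Filter.eventually_ge_atTop R] with r hr z hzr
  exact key z (hzr ▸ hr)

noncomputable def EGS3phi (n : ℕ) (hn : 3 ≤ n) (t : ℝ) : EuclideanSpace ℂ (Fin n) :=
  EuclideanSpace.single (Fin.castLE hn 0) (t:ℂ)

lemma EGS3phi_norm (n : ℕ) (hn : 3 ≤ n) (t : ℝ) (ht : 0 ≤ t) : ‖EGS3phi n hn t‖ = t := by
  rw [EGS3phi, EuclideanSpace.norm_single, Complex.norm_real, Real.norm_eq_abs, abs_of_nonneg ht]

lemma EGS3F_curve (n : ℕ) (hn : 3 ≤ n) (t : ℝ) :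
    EGS3F n hn (EGS3phi n hn t) = (t*(t-1))^2 := by
  have h10 : Fin.castLE hn 1 ≠ Fin.castLE hn 0 := by simp [Fin.ext_iff]
  have h20 : Fin.castLE hn 2 ≠ Fin.castLE hn 0 := by simp [Fin.ext_iff]
  have htail : (∑ k : Fin n, if 3 ≤ (k : ℕ) then ‖(EGS3phi n hn t) k‖ ^ 2 else 0) = 0 := by
    apply Finset.sum_eq_zero
    intro k _
    split
    · rw [EGS3phi, EuclideanSpace.single_apply, if_neg (by simp [Fin.ext_iff]; omega)]
      simp
    · rfl
  rw [EGS3F, htail, add_zero, Fin.sum_univ_three]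
  have e0 : (EGS3phi n hn t) (Fin.castLE hn 0) = (t:ℂ) := by
    rw [EGS3phi, EuclideanSpace.single_apply, if_pos rfl]
  have e1 : (EGS3phi n hn t) (Fin.castLE hn 1) = 0 := by
    rw [EGS3phi, EuclideanSpace.single_apply, if_neg h10]
  have e2 : (EGS3phi n hn t) (Fin.castLE hn 2) = 0 := by
    rw [EGS3phi, EuclideanSpace.single_apply, if_neg h20]
  rw [e0, e1, e2]
  simp only [mul_zero, zero_mul, norm_zero, Fin.val_zero, Nat.cast_zero]
  have h1 : (t:ℂ) * ((t:ℂ) + 0 + 0 - ((0:ℂ) + 1)) = ((t*(t-1):ℝ):ℂ) := by push_cast; ring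
  rw [h1, Complex.norm_real, Real.norm_eq_abs, sq_abs]
  norm_num

lemma EGS3_lower (n : ℕ) (hn : 3 ≤ n) (a : ℝ) (ha : a < 2) :
    ∀ᶠ t in Filter.atTop,
      a ≤ ((1:ℝ)/2) * Real.log (EGS3F n hn (EGS3phi n hn t)) / Real.log ‖EGS3phi n hn t‖ := by
  filter_upwards [Filter.eventually_ge_atTop (max 2 (Real.exp (Real.log 2 / (2 - a))))]
    with t ht
  have ht2 : (2:ℝ) ≤ t := le_trans (le_max_left _ _) ht
  have hlogt : 0 < Real.log t := Real.log_pos (by linarith)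
  have hlogt2 : Real.log 2 / (2 - a) ≤ Real.log t :=
    (Real.le_log_iff_exp_le (by linarith)).mpr (le_trans (le_max_right _ _) ht)
  rw [EGS3F_curve n hn t, EGS3phi_norm n hn t (by linarith)]
  have hpos : (0:ℝ) < t * (t - 1) := by nlinarith
  have hlog : Real.log ((t*(t-1))^2) = 2 * (Real.log t + Real.log (t-1)) := by
    rw [Real.log_pow, Real.log_mul (by linarith) (by linarith)]
    norm_num
  rw [hlog]
  have hlb : Real.log t - Real.log 2 ≤ Real.log (t - 1) := by
    have : Real.log (t/2) ≤ Real.log (t-1) :=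
      Real.log_le_log (by linarith) (by linarith)
    rwa [Real.log_div (by linarith) (by norm_num)] at this
  have h2a : Real.log 2 ≤ (2 - a) * Real.log t := by
    rw [div_le_iff₀ (by linarith)] at hlogt2
    linarith
  rw [le_div_iff₀ hlogt]
  nlinarith

lemma EGS3_tendsto (n : ℕ) (hn : 3 ≤ n) :
    Filter.Tendsto (EGS3phi n hn) Filter.atTop
      (Filter.comap (fun z : EuclideanSpace ℂ (Fin n) => ‖z‖) Filter.atTop) := by
  rw [Filter.tendsto_comap_iff]
  apply Filter.Tendsto.congr' (f₁ := id)
  · filter_upwards [Filter.eventually_ge_atTop (0:ℝ)] with t ht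
    exact (EGS3phi_norm n hn t ht).symm
  · exact Filter.tendsto_id

/-- For `n ≥ 3`, `P_j(z) = z_j (z₁ + 2 z₂ + 3 z₃ - j)` (`j = 1, 2, 3`) and
`u(z) = (1/2) log (|P₁(z)|² + |P₂(z)|² + |P₃(z)|² + ∑_{k ≥ 4} |z_k|²)`, one has
`limsup_{‖z‖ → ∞} u(z) / log ‖z‖ = 2`. -/
theorem entire_green_statement_3 (n : ℕ) (hn : 3 ≤ n) :
    Filter.limsup
      (fun z : EuclideanSpace ℂ (Fin n) =>
        (((1 : ℝ) / 2) * Real.log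
          ((∑ j : Fin 3,
              ‖z (Fin.castLE hn j) *
                (z (Fin.castLE hn 0) + 2 * z (Fin.castLE hn 1) + 3 * z (Fin.castLE hn 2)
                  - (((j : ℕ) : ℂ) + 1))‖ ^ 2) +
            ∑ k : Fin n, if 3 ≤ (k : ℕ) then ‖z k‖ ^ 2 else 0))
          / Real.log ‖z‖)
      (Filter.comap (fun z : EuclideanSpace ℂ (Fin n) => ‖z‖) Filter.atTop) = 2 := by
  set l := Filter.comap (fun z : EuclideanSpace ℂ (Fin n) => ‖z‖) Filter.atTop with hl
  have hfun : (fun z : EuclideanSpace ℂ (Fin n) =>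
        (((1 : ℝ) / 2) * Real.log
          ((∑ j : Fin 3,
              ‖z (Fin.castLE hn j) *
                (z (Fin.castLE hn 0) + 2 * z (Fin.castLE hn 1) + 3 * z (Fin.castLE hn 2)
                  - (((j : ℕ) : ℂ) + 1))‖ ^ 2) +
            ∑ k : Fin n, if 3 ≤ (k : ℕ) then ‖z k‖ ^ 2 else 0))
          / Real.log ‖z‖)
      = fun z => ((1:ℝ)/2) * Real.log (EGS3F n hn z) / Real.log ‖z‖ := rfl
  rw [hfun]
  have hfreq : ∀ a : ℝ, a < 2 → ∃ᶠ z in l,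
      a ≤ ((1:ℝ)/2) * Real.log (EGS3F n hn z) / Real.log ‖z‖ :=
    fun a ha => (EGS3_tendsto n hn).frequently ((EGS3_lower n hn a ha).frequently)
  have hbdd : Filter.IsBoundedUnder (· ≤ ·) l
      (fun z => ((1:ℝ)/2) * Real.log (EGS3F n hn z) / Real.log ‖z‖) :=
    ⟨3, Filter.eventually_map.mpr (EGS3_upper n hn 3 (by norm_num))⟩
  have hcobdd : Filter.IsCoboundedUnder (· ≤ ·) l
      (fun z => ((1:ℝ)/2) * Real.log (EGS3F n hn z) / Real.log ‖z‖) :=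
    Filter.IsCoboundedUnder.of_frequently_ge (hfreq 1 (by norm_num))
  apply le_antisymm
  · apply le_of_forall_gt_imp_ge_of_dense
    intro c hc
    exact Filter.limsup_le_of_le hcobdd (EGS3_upper n hn c hc)
  · apply le_of_forall_lt_imp_le_of_dense
    intro a ha
    exact Filter.le_limsup_of_frequently_le (hfreq a ha) hbdd
end

section
/- Let n ≥ 3, let P_j(z) = z_j(z₁ + 2z₂ + 3z₃ − j) for j = 1, 2, 3, and define u(z) = (1/2) log(|P₁(z)|² + |P₂(z)|² + |P₃(z)|² + Σ_{k=4}^{n} |z_k|²) for z ∈ ℂⁿ. Then for each point p in the set S = {0, e₁, e₂, e₃} there exist constants C > 0 and r > 0 such that |u(z) − log‖z − p‖| ≤ C for all z with 0 < ‖z − p‖ < r. In other words, u has a logarithmic pole of weight 1 at each point of S. -/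
section helpers

lemma split_sum {n : ℕ} (hn : 3 ≤ n) (f : Fin n → ℝ) :
    ∑ k : Fin n, f k =
      (∑ j : Fin 3, f (Fin.castLE hn j)) + ∑ k : Fin n, (if 3 ≤ (k:ℕ) then f k else 0) := by
  classical
  rw [← Finset.sum_filter_add_sum_filter_not Finset.univ (fun k : Fin n => 3 ≤ (k:ℕ)) f]
  rw [Finset.sum_filter, add_comm]
  congr 1
  refine (Finset.sum_nbij' (fun j : Fin 3 => Fin.castLE hn j)
    (fun k : Fin n => (⟨(k:ℕ) % 3, Nat.mod_lt _ (by norm_num)⟩ : Fin 3))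
    ?_ ?_ ?_ ?_ ?_).symm <;>
    (intro a ha; simp_all [Fin.ext_iff])

lemma coord_le {n : ℕ} (w : EuclideanSpace ℂ (Fin n)) (i : Fin n) : ‖w i‖ ≤ ‖w‖ := by
  have h : ‖w i‖^2 ≤ ‖w‖^2 := by
    rw [EuclideanSpace.norm_eq, Real.sq_sqrt (Finset.sum_nonneg fun _ _ => sq_nonneg _)]
    exact Finset.single_le_sum (fun j _ => sq_nonneg ‖w j‖) (Finset.mem_univ i)
  calc ‖w i‖ = Real.sqrt (‖w i‖^2) := (Real.sqrt_sq (norm_nonneg _)).symm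
  _ ≤ Real.sqrt (‖w‖^2) := Real.sqrt_le_sqrt h
  _ = ‖w‖ := Real.sqrt_sq (norm_nonneg _)

lemma norm_decomp {n : ℕ} (hn : 3 ≤ n) (w : EuclideanSpace ℂ (Fin n)) :
    ‖w‖^2 = ‖w (Fin.castLE hn 0)‖^2 + ‖w (Fin.castLE hn 1)‖^2 + ‖w (Fin.castLE hn 2)‖^2
      + ∑ k : Fin n, (if 3 ≤ (k:ℕ) then ‖w k‖^2 else 0) := by
  rw [EuclideanSpace.norm_eq, Real.sq_sqrt (Finset.sum_nonneg fun _ _ => sq_nonneg _)]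
  rw [split_sum hn (fun k => ‖w k‖^2), Fin.sum_univ_three]

lemma cl (x c : ℂ) : ‖c‖ - ‖x‖ ≤ ‖x - c‖ := by
  have h := norm_sub_norm_le c x
  rwa [norm_sub_rev] at h

lemma sum3 {n : ℕ} (hn : 3 ≤ n) (z : EuclideanSpace ℂ (Fin n)) :
    (∑ j : Fin 3,
        ‖z (Fin.castLE hn j) *
          (z (Fin.castLE hn 0) + 2 * z (Fin.castLE hn 1) + 3 * z (Fin.castLE hn 2)
            - (((j : ℕ) : ℂ) + 1))‖ ^ 2) =
    ‖z (Fin.castLE hn 0) * (z (Fin.castLE hn 0) + 2 * z (Fin.castLE hn 1) + 3 * z (Fin.castLE hn 2) - 1)‖^2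
    + ‖z (Fin.castLE hn 1) * (z (Fin.castLE hn 0) + 2 * z (Fin.castLE hn 1) + 3 * z (Fin.castLE hn 2) - 2)‖^2
    + ‖z (Fin.castLE hn 2) * (z (Fin.castLE hn 0) + 2 * z (Fin.castLE hn 1) + 3 * z (Fin.castLE hn 2) - 3)‖^2 := by
  rw [Fin.sum_univ_three]
  norm_num

lemma sandwich (F W : ℝ) (hW : 0 < W) (h1 : W^2 ≤ 400*F) (h2 : F ≤ 400*W^2) :
    |(1/2 : ℝ)*Real.log F - Real.log W| ≤ Real.log 400 := by
  have hF : 0 < F := by nlinarith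
  have hW2 : (0:ℝ) < W^2 := by positivity
  have hlog : Real.log (W^2) = 2 * Real.log W := by
    rw [Real.log_pow]; push_cast; ring
  have h100 : (0:ℝ) < Real.log 400 := Real.log_pos (by norm_num)
  have hu : Real.log F ≤ Real.log 400 + 2 * Real.log W := by
    calc Real.log F ≤ Real.log (400*W^2) := Real.log_le_log hF h2
    _ = Real.log 400 + Real.log (W^2) := Real.log_mul (by norm_num) (by positivity)
    _ = _ := by rw [hlog]
  have hl : 2 * Real.log W - Real.log 400 ≤ Real.log F := by
    have : Real.log (W^2) ≤ Real.log (400*F) := Real.log_le_log hW2 h1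
    rw [hlog, Real.log_mul (by norm_num) (ne_of_gt hF)] at this
    linarith
  rw [abs_le]; constructor <;> linarith

lemma cauchy3 (a b c v : ℝ) (hv : 0 ≤ v) (h : v ≤ a + b + c)
    (ha : 0 ≤ a) (hb : 0 ≤ b) (hc : 0 ≤ c) : v^2 ≤ 3*a^2 + 3*b^2 + 3*c^2 := by
  nlinarith [sq_nonneg (a-b), sq_nonneg (a-c), sq_nonneg (b-c), mul_le_mul h h hv (by linarith)]

lemma sqle6 (m w : ℝ) (hm : 0 ≤ m) (h : m ≤ 6*w) : m^2 ≤ 36*w^2 := by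
  nlinarith [mul_le_mul h h hm (by linarith)]

lemma real0 (A B C T W P1 P2 P3 F D1 D2 D3 : ℝ)
    (hA : 0 ≤ A) (hB : 0 ≤ B) (hC : 0 ≤ C) (hT : 0 ≤ T)
    (hW2 : W^2 = A^2 + B^2 + C^2 + T)
    (hAW : A ≤ W) (hBW : B ≤ W) (hCW : C ≤ W)
    (hsmall : W ≤ 1/12)
    (hD1l : 1 - (A + 2*B + 3*C) ≤ D1) (hD1u : D1 ≤ 1 + (A + 2*B + 3*C))
    (hD2l : 2 - (A + 2*B + 3*C) ≤ D2) (hD2u : D2 ≤ 2 + (A + 2*B + 3*C))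
    (hD3l : 3 - (A + 2*B + 3*C) ≤ D3) (hD3u : D3 ≤ 3 + (A + 2*B + 3*C))
    (hP1 : P1 = A * D1) (hP2 : P2 = B * D2) (hP3 : P3 = C * D3)
    (hF : F = P1^2 + P2^2 + P3^2 + T) :
    W^2 ≤ 400 * F ∧ F ≤ 400 * W^2 := by
  have hS : A + 2*B + 3*C ≤ 1/2 := by linarith
  have h1 : A/2 ≤ P1 := by
    rw [hP1]
    have h := mul_le_mul_of_nonneg_left hD1l hA
    have h' := mul_le_mul_of_nonneg_left hS hA
    linarith
  have h1' : P1 ≤ 4*A := by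
    rw [hP1]
    have h := mul_le_mul_of_nonneg_left hD1u hA
    have h' := mul_le_mul_of_nonneg_left hS hA
    linarith
  have h2 : B/2 ≤ P2 := by
    rw [hP2]
    have h := mul_le_mul_of_nonneg_left hD2l hB
    have h' := mul_le_mul_of_nonneg_left hS hB
    linarith
  have h2' : P2 ≤ 4*B := by
    rw [hP2]
    have h := mul_le_mul_of_nonneg_left hD2u hB
    have h' := mul_le_mul_of_nonneg_left hS hB
    linarith
  have h3 : C/2 ≤ P3 := by
    rw [hP3]
    have h := mul_le_mul_of_nonneg_left hD3l hC
    have h' := mul_le_mul_of_nonneg_left hS hC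
    linarith
  have h3' : P3 ≤ 4*C := by
    rw [hP3]
    have h := mul_le_mul_of_nonneg_left hD3u hC
    have h' := mul_le_mul_of_nonneg_left hS hC
    linarith
  have hA2 : 0 ≤ A/2 := by linarith
  have hB2 : 0 ≤ B/2 := by linarith
  have hC2 : 0 ≤ C/2 := by linarith
  have hq1 : (A/2)^2 ≤ P1^2 := pow_le_pow_left₀ hA2 h1 2
  have hq2 : (B/2)^2 ≤ P2^2 := pow_le_pow_left₀ hB2 h2 2
  have hq3 : (C/2)^2 ≤ P3^2 := pow_le_pow_left₀ hC2 h3 2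
  have hq1' : P1^2 ≤ (4*A)^2 := pow_le_pow_left₀ (le_trans hA2 h1) h1' 2
  have hq2' : P2^2 ≤ (4*B)^2 := pow_le_pow_left₀ (le_trans hB2 h2) h2' 2
  have hq3' : P3^2 ≤ (4*C)^2 := pow_le_pow_left₀ (le_trans hC2 h3) h3' 2
  constructor
  · linarith [hq1, hq2, hq3]
  · linarith [hq1', hq2', hq3']

lemma real_e (V X Y T W M E DX DY P PX PY F : ℝ)
    (hV : 0 ≤ V) (hX : 0 ≤ X) (hY : 0 ≤ Y) (hT : 0 ≤ T) (hM : 0 ≤ M)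
    (hW2 : W^2 = V^2 + X^2 + Y^2 + T)
    (hVW : V ≤ W) (hsmall : W ≤ 1/12)
    (hM6 : M ≤ 6*W) (hVtri : V ≤ M + 3*X + 3*Y)
    (hEl : 1 - V ≤ E) (hEu : E ≤ 1 + V)
    (hDXl : 1 - M ≤ DX) (hDXu : DX ≤ 3 + M)
    (hDYl : 1 - M ≤ DY) (hDYu : DY ≤ 3 + M)
    (hP : P = E * M) (hPX : PX = X * DX) (hPY : PY = Y * DY)
    (hF : F = P^2 + PX^2 + PY^2 + T) :
    W^2 ≤ 400 * F ∧ F ≤ 400 * W^2 := by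
  have hMh : M ≤ 1/2 := by linarith
  have hVh : V ≤ 1/12 := by linarith
  have hP1 : (11/12) * M ≤ P := by
    rw [hP]
    have h := mul_le_mul_of_nonneg_right hEl hM
    have h' := mul_le_mul_of_nonneg_right hVh hM
    linarith
  have hP1' : P ≤ (13/12) * M := by
    rw [hP]
    have h := mul_le_mul_of_nonneg_right hEu hM
    have h' := mul_le_mul_of_nonneg_right hVh hM
    linarith
  have hPX1 : X/2 ≤ PX := by
    rw [hPX]
    have h := mul_le_mul_of_nonneg_left hDXl hX
    have h' := mul_le_mul_of_nonneg_left hMh hX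
    linarith
  have hPX1' : PX ≤ 4*X := by
    rw [hPX]
    have h := mul_le_mul_of_nonneg_left hDXu hX
    have h' := mul_le_mul_of_nonneg_left hMh hX
    linarith
  have hPY1 : Y/2 ≤ PY := by
    rw [hPY]
    have h := mul_le_mul_of_nonneg_left hDYl hY
    have h' := mul_le_mul_of_nonneg_left hMh hY
    linarith
  have hPY1' : PY ≤ 4*Y := by
    rw [hPY]
    have h := mul_le_mul_of_nonneg_left hDYu hY
    have h' := mul_le_mul_of_nonneg_left hMh hY
    linarith
  have hMn : 0 ≤ (11/12) * M := by linarith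
  have hXn : 0 ≤ X/2 := by linarith
  have hYn : 0 ≤ Y/2 := by linarith
  have hq1 : ((11/12) * M)^2 ≤ P^2 := pow_le_pow_left₀ hMn hP1 2
  have hq2 : (X/2)^2 ≤ PX^2 := pow_le_pow_left₀ hXn hPX1 2
  have hq3 : (Y/2)^2 ≤ PY^2 := pow_le_pow_left₀ hYn hPY1 2
  have hq1' : P^2 ≤ ((13/12) * M)^2 := pow_le_pow_left₀ (le_trans hMn hP1) hP1' 2
  have hq2' : PX^2 ≤ (4*X)^2 := pow_le_pow_left₀ (le_trans hXn hPX1) hPX1' 2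
  have hq3' : PY^2 ≤ (4*Y)^2 := pow_le_pow_left₀ (le_trans hYn hPY1) hPY1' 2
  have hV2 : V^2 ≤ 3*M^2 + 27*X^2 + 27*Y^2 := by
    have := cauchy3 M (3*X) (3*Y) V hV (by linarith) hM (by linarith) (by linarith)
    linarith
  have hM2 : M^2 ≤ 36 * W^2 := sqle6 M W hM hM6
  constructor
  · linarith [sq_nonneg V, sq_nonneg X, sq_nonneg Y, sq_nonneg M]
  · linarith [sq_nonneg V, sq_nonneg X, sq_nonneg Y, sq_nonneg M]

end helpers

/-- For `n ≥ 3`, `P_j(z) = z_j (z₁ + 2 z₂ + 3 z₃ - j)` (`j = 1, 2, 3`) and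
`u(z) = (1/2) log (|P₁(z)|² + |P₂(z)|² + |P₃(z)|² + ∑_{k ≥ 4} |z_k|²)`, the function
`u` has a logarithmic pole of weight `1` at each point of `S = {0, e₁, e₂, e₃}`:
for each `p ∈ S` there are `C > 0` and `r > 0` with `|u(z) - log ‖z - p‖| ≤ C`
whenever `0 < ‖z - p‖ < r`. -/
theorem entire_green_statement_4 (n : ℕ) (hn : 3 ≤ n) :
    ∀ p ∈ ({0, EuclideanSpace.single (Fin.castLE hn 0) (1 : ℂ),
        EuclideanSpace.single (Fin.castLE hn 1) (1 : ℂ),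
        EuclideanSpace.single (Fin.castLE hn 2) (1 : ℂ)} :
          Set (EuclideanSpace ℂ (Fin n))),
      ∃ C > (0 : ℝ), ∃ r > (0 : ℝ), ∀ z : EuclideanSpace ℂ (Fin n),
        0 < ‖z - p‖ → ‖z - p‖ < r →
        |((1 : ℝ) / 2) * Real.log
            ((∑ j : Fin 3,
                ‖z (Fin.castLE hn j) *
                  (z (Fin.castLE hn 0) + 2 * z (Fin.castLE hn 1) + 3 * z (Fin.castLE hn 2)
                    - (((j : ℕ) : ℂ) + 1))‖ ^ 2) +
              ∑ k : Fin n, if 3 ≤ (k : ℕ) then ‖z k‖ ^ 2 else 0)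
          - Real.log ‖z - p‖| ≤ C := by
  intro p hp
  simp only [Set.mem_insert_iff, Set.mem_singleton_iff] at hp
  rcases hp with rfl | rfl | rfl | rfl
  · -- p = 0
    refine ⟨Real.log 400, Real.log_pos (by norm_num), 1/12, by norm_num, ?_⟩
    intro z hz0 hzr
    simp only [sub_zero] at hz0 hzr ⊢
    have hA := coord_le z (Fin.castLE hn 0)
    have hB := coord_le z (Fin.castLE hn 1)
    have hC := coord_le z (Fin.castLE hn 2)
    have hW2 := norm_decomp hn z
    have hT : 0 ≤ ∑ k : Fin n, (if 3 ≤ (k:ℕ) then ‖z k‖^2 else 0) :=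
      Finset.sum_nonneg fun k _ => by positivity
    set L : ℂ := z (Fin.castLE hn 0) + 2 * z (Fin.castLE hn 1) + 3 * z (Fin.castLE hn 2) with hLdef
    have hL : ‖L‖ ≤ ‖z (Fin.castLE hn 0)‖ + 2*‖z (Fin.castLE hn 1)‖ + 3*‖z (Fin.castLE hn 2)‖ := by
      calc ‖L‖ ≤ ‖z (Fin.castLE hn 0) + 2 * z (Fin.castLE hn 1)‖ + ‖3 * z (Fin.castLE hn 2)‖ :=
            norm_add_le _ _
      _ ≤ ‖z (Fin.castLE hn 0)‖ + ‖2 * z (Fin.castLE hn 1)‖ + ‖3 * z (Fin.castLE hn 2)‖ := by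
            linarith [norm_add_le (z (Fin.castLE hn 0)) (2 * z (Fin.castLE hn 1))]
      _ = _ := by rw [norm_mul, norm_mul, Complex.norm_ofNat, Complex.norm_ofNat]
    have hD1l := cl L 1
    have hD2l := cl L 2
    have hD3l := cl L 3
    rw [norm_one] at hD1l
    rw [Complex.norm_ofNat] at hD2l hD3l
    have hD1u := norm_sub_le L 1
    have hD2u := norm_sub_le L 2
    have hD3u := norm_sub_le L 3
    rw [norm_one] at hD1u
    rw [Complex.norm_ofNat] at hD2u hD3u
    apply sandwich _ _ hz0
    · exact (real0 ‖z (Fin.castLE hn 0)‖ ‖z (Fin.castLE hn 1)‖ ‖z (Fin.castLE hn 2)‖ _ ‖z‖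
        (‖z (Fin.castLE hn 0)‖ * ‖L - 1‖) (‖z (Fin.castLE hn 1)‖ * ‖L - 2‖)
        (‖z (Fin.castLE hn 2)‖ * ‖L - 3‖) _ ‖L - 1‖ ‖L - 2‖ ‖L - 3‖
        (norm_nonneg _) (norm_nonneg _) (norm_nonneg _) hT hW2 hA hB hC (le_of_lt hzr)
        (by linarith) (by linarith) (by linarith) (by linarith) (by linarith) (by linarith)
        rfl rfl rfl
        (by rw [sum3 hn z, ← hLdef, norm_mul, norm_mul, norm_mul])).1
    · exact (real0 ‖z (Fin.castLE hn 0)‖ ‖z (Fin.castLE hn 1)‖ ‖z (Fin.castLE hn 2)‖ _ ‖z‖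
        (‖z (Fin.castLE hn 0)‖ * ‖L - 1‖) (‖z (Fin.castLE hn 1)‖ * ‖L - 2‖)
        (‖z (Fin.castLE hn 2)‖ * ‖L - 3‖) _ ‖L - 1‖ ‖L - 2‖ ‖L - 3‖
        (norm_nonneg _) (norm_nonneg _) (norm_nonneg _) hT hW2 hA hB hC (le_of_lt hzr)
        (by linarith) (by linarith) (by linarith) (by linarith) (by linarith) (by linarith)
        rfl rfl rfl
        (by rw [sum3 hn z, ← hLdef, norm_mul, norm_mul, norm_mul])).2
  · -- p = e1
    refine ⟨Real.log 400, Real.log_pos (by norm_num), 1/12, by norm_num, ?_⟩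
    intro z hz0 hzr
    set P : EuclideanSpace ℂ (Fin n) := EuclideanSpace.single (Fin.castLE hn 0) (1:ℂ) with hPdef
    have hc0 : (z - P) (Fin.castLE hn 0) = z (Fin.castLE hn 0) - 1 := by
      simp [hPdef, EuclideanSpace.single_apply]
    have hc1 : (z - P) (Fin.castLE hn 1) = z (Fin.castLE hn 1) := by
      simp [hPdef, EuclideanSpace.single_apply, Fin.ext_iff]
    have hc2 : (z - P) (Fin.castLE hn 2) = z (Fin.castLE hn 2) := by
      simp [hPdef, EuclideanSpace.single_apply, Fin.ext_iff]
    have htail : ∀ k : Fin n, 3 ≤ (k:ℕ) → (z - P) k = z k := by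
      intro k h
      have hk : k ≠ Fin.castLE hn 0 := by
        intro e; rw [Fin.ext_iff] at e; simp at e; omega
      simp [hPdef, EuclideanSpace.single_apply, hk]
    have hW2 := norm_decomp hn (z - P)
    rw [hc0, hc1, hc2] at hW2
    rw [show (∑ k : Fin n, if 3 ≤ (k:ℕ) then ‖(z-P) k‖^2 else 0)
        = ∑ k : Fin n, if 3 ≤ (k:ℕ) then ‖z k‖^2 else 0 from
      Finset.sum_congr rfl fun k _ => by
        by_cases h : 3 ≤ (k:ℕ)
        · rw [if_pos h, if_pos h, htail k h]
        · rw [if_neg h, if_neg h]] at hW2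
    have hA : ‖z (Fin.castLE hn 0) - 1‖ ≤ ‖z - P‖ := by
      have := coord_le (z - P) (Fin.castLE hn 0); rwa [hc0] at this
    have hB : ‖z (Fin.castLE hn 1)‖ ≤ ‖z - P‖ := by
      have := coord_le (z - P) (Fin.castLE hn 1); rwa [hc1] at this
    have hC : ‖z (Fin.castLE hn 2)‖ ≤ ‖z - P‖ := by
      have := coord_le (z - P) (Fin.castLE hn 2); rwa [hc2] at this
    have hT : 0 ≤ ∑ k : Fin n, (if 3 ≤ (k:ℕ) then ‖z k‖^2 else 0) :=
      Finset.sum_nonneg fun k _ => by positivity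
    set M' : ℂ := (z (Fin.castLE hn 0) - 1) + 2 * z (Fin.castLE hn 1) + 3 * z (Fin.castLE hn 2) with hMdef
    have hM6 : ‖M'‖ ≤ 6 * ‖z - P‖ := by
      have t1 : ‖M'‖ ≤ ‖(z (Fin.castLE hn 0) - 1) + 2 * z (Fin.castLE hn 1)‖
          + ‖3 * z (Fin.castLE hn 2)‖ := norm_add_le _ _
      have t2 : ‖(z (Fin.castLE hn 0) - 1) + 2 * z (Fin.castLE hn 1)‖
          ≤ ‖z (Fin.castLE hn 0) - 1‖ + ‖2 * z (Fin.castLE hn 1)‖ := norm_add_le _ _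
      rw [norm_mul, Complex.norm_ofNat] at t1 t2
      linarith
    have hVtri : ‖z (Fin.castLE hn 0) - 1‖
        ≤ ‖M'‖ + 3*‖z (Fin.castLE hn 1)‖ + 3*‖z (Fin.castLE hn 2)‖ := by
      have e : z (Fin.castLE hn 0) - 1 = M' - 2 * z (Fin.castLE hn 1) - 3 * z (Fin.castLE hn 2) := by
        rw [hMdef]; ring
      rw [e]
      have t1 : ‖M' - 2 * z (Fin.castLE hn 1) - 3 * z (Fin.castLE hn 2)‖
          ≤ ‖M' - 2 * z (Fin.castLE hn 1)‖ + ‖3 * z (Fin.castLE hn 2)‖ := norm_sub_le _ _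
      have t2 : ‖M' - 2 * z (Fin.castLE hn 1)‖ ≤ ‖M'‖ + ‖2 * z (Fin.castLE hn 1)‖ := norm_sub_le _ _
      rw [norm_mul, Complex.norm_ofNat] at t1 t2
      linarith [norm_nonneg (z (Fin.castLE hn 1)), norm_nonneg (z (Fin.castLE hn 2))]
    have hEl : 1 - ‖z (Fin.castLE hn 0) - 1‖ ≤ ‖1 + (z (Fin.castLE hn 0) - 1)‖ := by
      have h := norm_sub_le (1 + (z (Fin.castLE hn 0) - 1)) (z (Fin.castLE hn 0) - 1)
      rw [add_sub_cancel_right, norm_one] at h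
      linarith
    have hEu : ‖1 + (z (Fin.castLE hn 0) - 1)‖ ≤ 1 + ‖z (Fin.castLE hn 0) - 1‖ := by
      have h := norm_add_le (1:ℂ) (z (Fin.castLE hn 0) - 1)
      rwa [norm_one] at h
    have hDXl := cl M' 1
    rw [norm_one] at hDXl
    have hDXu := norm_sub_le M' 1
    rw [norm_one] at hDXu
    have hDYl := cl M' 2
    rw [Complex.norm_ofNat] at hDYl
    have hDYu := norm_sub_le M' 2
    rw [Complex.norm_ofNat] at hDYu
    have e1 : z (Fin.castLE hn 0) * (z (Fin.castLE hn 0) + 2 * z (Fin.castLE hn 1)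
          + 3 * z (Fin.castLE hn 2) - 1)
        = (1 + (z (Fin.castLE hn 0) - 1)) * M' := by rw [hMdef]; ring
    have e2 : z (Fin.castLE hn 1) * (z (Fin.castLE hn 0) + 2 * z (Fin.castLE hn 1)
          + 3 * z (Fin.castLE hn 2) - 2)
        = z (Fin.castLE hn 1) * (M' - 1) := by rw [hMdef]; ring
    have e3 : z (Fin.castLE hn 2) * (z (Fin.castLE hn 0) + 2 * z (Fin.castLE hn 1)
          + 3 * z (Fin.castLE hn 2) - 3)
        = z (Fin.castLE hn 2) * (M' - 2) := by rw [hMdef]; ring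
    apply sandwich _ _ hz0
    · exact (real_e ‖z (Fin.castLE hn 0) - 1‖ ‖z (Fin.castLE hn 1)‖ ‖z (Fin.castLE hn 2)‖ _ ‖z - P‖
        ‖M'‖ ‖1 + (z (Fin.castLE hn 0) - 1)‖ ‖M' - 1‖ ‖M' - 2‖
        (‖1 + (z (Fin.castLE hn 0) - 1)‖ * ‖M'‖) (‖z (Fin.castLE hn 1)‖ * ‖M' - 1‖)
        (‖z (Fin.castLE hn 2)‖ * ‖M' - 2‖) _
        (norm_nonneg _) (norm_nonneg _) (norm_nonneg _) hT (norm_nonneg _)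
        hW2 hA (le_of_lt hzr) hM6 hVtri hEl hEu
        (by linarith) (by linarith) (by linarith) (by linarith)
        rfl rfl rfl
        (by rw [sum3 hn z, e1, e2, e3, norm_mul, norm_mul, norm_mul])).1
    · exact (real_e ‖z (Fin.castLE hn 0) - 1‖ ‖z (Fin.castLE hn 1)‖ ‖z (Fin.castLE hn 2)‖ _ ‖z - P‖
        ‖M'‖ ‖1 + (z (Fin.castLE hn 0) - 1)‖ ‖M' - 1‖ ‖M' - 2‖
        (‖1 + (z (Fin.castLE hn 0) - 1)‖ * ‖M'‖) (‖z (Fin.castLE hn 1)‖ * ‖M' - 1‖)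
        (‖z (Fin.castLE hn 2)‖ * ‖M' - 2‖) _
        (norm_nonneg _) (norm_nonneg _) (norm_nonneg _) hT (norm_nonneg _)
        hW2 hA (le_of_lt hzr) hM6 hVtri hEl hEu
        (by linarith) (by linarith) (by linarith) (by linarith)
        rfl rfl rfl
        (by rw [sum3 hn z, e1, e2, e3, norm_mul, norm_mul, norm_mul])).2
  · -- p = e2
    refine ⟨Real.log 400, Real.log_pos (by norm_num), 1/12, by norm_num, ?_⟩
    intro z hz0 hzr
    set P : EuclideanSpace ℂ (Fin n) := EuclideanSpace.single (Fin.castLE hn 1) (1:ℂ) with hPdef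
    have hc0 : (z - P) (Fin.castLE hn 0) = z (Fin.castLE hn 0) := by
      simp [hPdef, EuclideanSpace.single_apply, Fin.ext_iff]
    have hc1 : (z - P) (Fin.castLE hn 1) = z (Fin.castLE hn 1) - 1 := by
      simp [hPdef, EuclideanSpace.single_apply]
    have hc2 : (z - P) (Fin.castLE hn 2) = z (Fin.castLE hn 2) := by
      simp [hPdef, EuclideanSpace.single_apply, Fin.ext_iff]
    have htail : ∀ k : Fin n, 3 ≤ (k:ℕ) → (z - P) k = z k := by
      intro k h
      have hk : k ≠ Fin.castLE hn 1 := by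
        intro e; rw [Fin.ext_iff] at e; simp at e; omega
      simp [hPdef, EuclideanSpace.single_apply, hk]
    have hW2 := norm_decomp hn (z - P)
    rw [hc0, hc1, hc2] at hW2
    rw [show (∑ k : Fin n, if 3 ≤ (k:ℕ) then ‖(z-P) k‖^2 else 0)
        = ∑ k : Fin n, if 3 ≤ (k:ℕ) then ‖z k‖^2 else 0 from
      Finset.sum_congr rfl fun k _ => by
        by_cases h : 3 ≤ (k:ℕ)
        · rw [if_pos h, if_pos h, htail k h]
        · rw [if_neg h, if_neg h]] at hW2
    have hA : ‖z (Fin.castLE hn 0)‖ ≤ ‖z - P‖ := by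
      have := coord_le (z - P) (Fin.castLE hn 0); rwa [hc0] at this
    have hB : ‖z (Fin.castLE hn 1) - 1‖ ≤ ‖z - P‖ := by
      have := coord_le (z - P) (Fin.castLE hn 1); rwa [hc1] at this
    have hC : ‖z (Fin.castLE hn 2)‖ ≤ ‖z - P‖ := by
      have := coord_le (z - P) (Fin.castLE hn 2); rwa [hc2] at this
    have hT : 0 ≤ ∑ k : Fin n, (if 3 ≤ (k:ℕ) then ‖z k‖^2 else 0) :=
      Finset.sum_nonneg fun k _ => by positivity
    set M' : ℂ := z (Fin.castLE hn 0) + 2 * (z (Fin.castLE hn 1) - 1) + 3 * z (Fin.castLE hn 2) with hMdef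
    have hM6 : ‖M'‖ ≤ 6 * ‖z - P‖ := by
      have t1 : ‖M'‖ ≤ ‖z (Fin.castLE hn 0) + 2 * (z (Fin.castLE hn 1) - 1)‖
          + ‖3 * z (Fin.castLE hn 2)‖ := norm_add_le _ _
      have t2 : ‖z (Fin.castLE hn 0) + 2 * (z (Fin.castLE hn 1) - 1)‖
          ≤ ‖z (Fin.castLE hn 0)‖ + ‖2 * (z (Fin.castLE hn 1) - 1)‖ := norm_add_le _ _
      rw [norm_mul, Complex.norm_ofNat] at t1 t2
      linarith
    have hVtri : ‖z (Fin.castLE hn 1) - 1‖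
        ≤ ‖M'‖ + 3*‖z (Fin.castLE hn 0)‖ + 3*‖z (Fin.castLE hn 2)‖ := by
      have e : (2:ℂ) * (z (Fin.castLE hn 1) - 1) = M' - z (Fin.castLE hn 0) - 3 * z (Fin.castLE hn 2) := by
        rw [hMdef]; ring
      have t0 : ‖(2:ℂ) * (z (Fin.castLE hn 1) - 1)‖ = 2 * ‖z (Fin.castLE hn 1) - 1‖ := by
        rw [norm_mul, Complex.norm_ofNat]
      have t1 : ‖M' - z (Fin.castLE hn 0) - 3 * z (Fin.castLE hn 2)‖
          ≤ ‖M' - z (Fin.castLE hn 0)‖ + ‖3 * z (Fin.castLE hn 2)‖ := norm_sub_le _ _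
      have t2 : ‖M' - z (Fin.castLE hn 0)‖ ≤ ‖M'‖ + ‖z (Fin.castLE hn 0)‖ := norm_sub_le _ _
      rw [norm_mul, Complex.norm_ofNat] at t1
      have t3 : 2 * ‖z (Fin.castLE hn 1) - 1‖ ≤ ‖M'‖ + ‖z (Fin.castLE hn 0)‖
          + 3 * ‖z (Fin.castLE hn 2)‖ := by rw [← t0, e]; linarith
      linarith [norm_nonneg (z (Fin.castLE hn 0)), norm_nonneg (z (Fin.castLE hn 2)),
        norm_nonneg M']
    have hEl : 1 - ‖z (Fin.castLE hn 1) - 1‖ ≤ ‖1 + (z (Fin.castLE hn 1) - 1)‖ := by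
      have h := norm_sub_le (1 + (z (Fin.castLE hn 1) - 1)) (z (Fin.castLE hn 1) - 1)
      rw [add_sub_cancel_right, norm_one] at h
      linarith
    have hEu : ‖1 + (z (Fin.castLE hn 1) - 1)‖ ≤ 1 + ‖z (Fin.castLE hn 1) - 1‖ := by
      have h := norm_add_le (1:ℂ) (z (Fin.castLE hn 1) - 1)
      rwa [norm_one] at h
    have hDXl : 1 - ‖M'‖ ≤ ‖M' + 1‖ := by
      have h := norm_sub_le (M' + 1) M'
      rw [add_sub_cancel_left, norm_one] at h
      linarith
    have hDXu : ‖M' + 1‖ ≤ ‖M'‖ + 1 := by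
      have h := norm_add_le M' 1
      rwa [norm_one] at h
    have hDYl := cl M' 1
    rw [norm_one] at hDYl
    have hDYu := norm_sub_le M' 1
    rw [norm_one] at hDYu
    have e1 : z (Fin.castLE hn 0) * (z (Fin.castLE hn 0) + 2 * z (Fin.castLE hn 1)
          + 3 * z (Fin.castLE hn 2) - 1)
        = z (Fin.castLE hn 0) * (M' + 1) := by rw [hMdef]; ring
    have e2 : z (Fin.castLE hn 1) * (z (Fin.castLE hn 0) + 2 * z (Fin.castLE hn 1)
          + 3 * z (Fin.castLE hn 2) - 2)
        = (1 + (z (Fin.castLE hn 1) - 1)) * M' := by rw [hMdef]; ring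
    have e3 : z (Fin.castLE hn 2) * (z (Fin.castLE hn 0) + 2 * z (Fin.castLE hn 1)
          + 3 * z (Fin.castLE hn 2) - 3)
        = z (Fin.castLE hn 2) * (M' - 1) := by rw [hMdef]; ring
    apply sandwich _ _ hz0
    · exact (real_e ‖z (Fin.castLE hn 1) - 1‖ ‖z (Fin.castLE hn 0)‖ ‖z (Fin.castLE hn 2)‖ _ ‖z - P‖
        ‖M'‖ ‖1 + (z (Fin.castLE hn 1) - 1)‖ ‖M' + 1‖ ‖M' - 1‖
        (‖1 + (z (Fin.castLE hn 1) - 1)‖ * ‖M'‖) (‖z (Fin.castLE hn 0)‖ * ‖M' + 1‖)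
        (‖z (Fin.castLE hn 2)‖ * ‖M' - 1‖) _
        (norm_nonneg _) (norm_nonneg _) (norm_nonneg _) hT (norm_nonneg _)
        (by linarith) hB (le_of_lt hzr) hM6 hVtri hEl hEu
        (by linarith) (by linarith) (by linarith) (by linarith)
        rfl rfl rfl
        (by rw [sum3 hn z, e1, e2, e3, norm_mul, norm_mul, norm_mul]; ring)).1
    · exact (real_e ‖z (Fin.castLE hn 1) - 1‖ ‖z (Fin.castLE hn 0)‖ ‖z (Fin.castLE hn 2)‖ _ ‖z - P‖
        ‖M'‖ ‖1 + (z (Fin.castLE hn 1) - 1)‖ ‖M' + 1‖ ‖M' - 1‖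
        (‖1 + (z (Fin.castLE hn 1) - 1)‖ * ‖M'‖) (‖z (Fin.castLE hn 0)‖ * ‖M' + 1‖)
        (‖z (Fin.castLE hn 2)‖ * ‖M' - 1‖) _
        (norm_nonneg _) (norm_nonneg _) (norm_nonneg _) hT (norm_nonneg _)
        (by linarith) hB (le_of_lt hzr) hM6 hVtri hEl hEu
        (by linarith) (by linarith) (by linarith) (by linarith)
        rfl rfl rfl
        (by rw [sum3 hn z, e1, e2, e3, norm_mul, norm_mul, norm_mul]; ring)).2
  · -- p = e3
    refine ⟨Real.log 400, Real.log_pos (by norm_num), 1/12, by norm_num, ?_⟩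
    intro z hz0 hzr
    set P : EuclideanSpace ℂ (Fin n) := EuclideanSpace.single (Fin.castLE hn 2) (1:ℂ) with hPdef
    have hc0 : (z - P) (Fin.castLE hn 0) = z (Fin.castLE hn 0) := by
      simp [hPdef, EuclideanSpace.single_apply, Fin.ext_iff]
    have hc1 : (z - P) (Fin.castLE hn 1) = z (Fin.castLE hn 1) := by
      simp [hPdef, EuclideanSpace.single_apply, Fin.ext_iff]
    have hc2 : (z - P) (Fin.castLE hn 2) = z (Fin.castLE hn 2) - 1 := by
      simp [hPdef, EuclideanSpace.single_apply]
    have htail : ∀ k : Fin n, 3 ≤ (k:ℕ) → (z - P) k = z k := by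
      intro k h
      have hk : k ≠ Fin.castLE hn 2 := by
        intro e; rw [Fin.ext_iff] at e; simp at e; omega
      simp [hPdef, EuclideanSpace.single_apply, hk]
    have hW2 := norm_decomp hn (z - P)
    rw [hc0, hc1, hc2] at hW2
    rw [show (∑ k : Fin n, if 3 ≤ (k:ℕ) then ‖(z-P) k‖^2 else 0)
        = ∑ k : Fin n, if 3 ≤ (k:ℕ) then ‖z k‖^2 else 0 from
      Finset.sum_congr rfl fun k _ => by
        by_cases h : 3 ≤ (k:ℕ)
        · rw [if_pos h, if_pos h, htail k h]
        · rw [if_neg h, if_neg h]] at hW2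
    have hA : ‖z (Fin.castLE hn 0)‖ ≤ ‖z - P‖ := by
      have := coord_le (z - P) (Fin.castLE hn 0); rwa [hc0] at this
    have hB : ‖z (Fin.castLE hn 1)‖ ≤ ‖z - P‖ := by
      have := coord_le (z - P) (Fin.castLE hn 1); rwa [hc1] at this
    have hC : ‖z (Fin.castLE hn 2) - 1‖ ≤ ‖z - P‖ := by
      have := coord_le (z - P) (Fin.castLE hn 2); rwa [hc2] at this
    have hT : 0 ≤ ∑ k : Fin n, (if 3 ≤ (k:ℕ) then ‖z k‖^2 else 0) :=
      Finset.sum_nonneg fun k _ => by positivity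
    set M' : ℂ := z (Fin.castLE hn 0) + 2 * z (Fin.castLE hn 1) + 3 * (z (Fin.castLE hn 2) - 1) with hMdef
    have hM6 : ‖M'‖ ≤ 6 * ‖z - P‖ := by
      have t1 : ‖M'‖ ≤ ‖z (Fin.castLE hn 0) + 2 * z (Fin.castLE hn 1)‖
          + ‖3 * (z (Fin.castLE hn 2) - 1)‖ := norm_add_le _ _
      have t2 : ‖z (Fin.castLE hn 0) + 2 * z (Fin.castLE hn 1)‖
          ≤ ‖z (Fin.castLE hn 0)‖ + ‖2 * z (Fin.castLE hn 1)‖ := norm_add_le _ _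
      rw [norm_mul, Complex.norm_ofNat] at t1 t2
      linarith
    have hVtri : ‖z (Fin.castLE hn 2) - 1‖
        ≤ ‖M'‖ + 3*‖z (Fin.castLE hn 0)‖ + 3*‖z (Fin.castLE hn 1)‖ := by
      have e : (3:ℂ) * (z (Fin.castLE hn 2) - 1) = M' - z (Fin.castLE hn 0) - 2 * z (Fin.castLE hn 1) := by
        rw [hMdef]; ring
      have t0 : ‖(3:ℂ) * (z (Fin.castLE hn 2) - 1)‖ = 3 * ‖z (Fin.castLE hn 2) - 1‖ := by
        rw [norm_mul, Complex.norm_ofNat]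
      have t1 : ‖M' - z (Fin.castLE hn 0) - 2 * z (Fin.castLE hn 1)‖
          ≤ ‖M' - z (Fin.castLE hn 0)‖ + ‖2 * z (Fin.castLE hn 1)‖ := norm_sub_le _ _
      have t2 : ‖M' - z (Fin.castLE hn 0)‖ ≤ ‖M'‖ + ‖z (Fin.castLE hn 0)‖ := norm_sub_le _ _
      rw [norm_mul, Complex.norm_ofNat] at t1
      have t3 : 3 * ‖z (Fin.castLE hn 2) - 1‖ ≤ ‖M'‖ + ‖z (Fin.castLE hn 0)‖
          + 2 * ‖z (Fin.castLE hn 1)‖ := by rw [← t0, e]; linarith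
      linarith [norm_nonneg (z (Fin.castLE hn 0)), norm_nonneg (z (Fin.castLE hn 1)),
        norm_nonneg M']
    have hEl : 1 - ‖z (Fin.castLE hn 2) - 1‖ ≤ ‖1 + (z (Fin.castLE hn 2) - 1)‖ := by
      have h := norm_sub_le (1 + (z (Fin.castLE hn 2) - 1)) (z (Fin.castLE hn 2) - 1)
      rw [add_sub_cancel_right, norm_one] at h
      linarith
    have hEu : ‖1 + (z (Fin.castLE hn 2) - 1)‖ ≤ 1 + ‖z (Fin.castLE hn 2) - 1‖ := by
      have h := norm_add_le (1:ℂ) (z (Fin.castLE hn 2) - 1)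
      rwa [norm_one] at h
    have hDXl : 2 - ‖M'‖ ≤ ‖M' + 2‖ := by
      have h := norm_sub_le (M' + 2) M'
      rw [add_sub_cancel_left, Complex.norm_ofNat] at h
      linarith
    have hDXu : ‖M' + 2‖ ≤ ‖M'‖ + 2 := by
      have h := norm_add_le M' 2
      rwa [Complex.norm_ofNat] at h
    have hDYl : 1 - ‖M'‖ ≤ ‖M' + 1‖ := by
      have h := norm_sub_le (M' + 1) M'
      rw [add_sub_cancel_left, norm_one] at h
      linarith
    have hDYu : ‖M' + 1‖ ≤ ‖M'‖ + 1 := by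
      have h := norm_add_le M' 1
      rwa [norm_one] at h
    have e1 : z (Fin.castLE hn 0) * (z (Fin.castLE hn 0) + 2 * z (Fin.castLE hn 1)
          + 3 * z (Fin.castLE hn 2) - 1)
        = z (Fin.castLE hn 0) * (M' + 2) := by rw [hMdef]; ring
    have e2 : z (Fin.castLE hn 1) * (z (Fin.castLE hn 0) + 2 * z (Fin.castLE hn 1)
          + 3 * z (Fin.castLE hn 2) - 2)
        = z (Fin.castLE hn 1) * (M' + 1) := by rw [hMdef]; ring
    have e3 : z (Fin.castLE hn 2) * (z (Fin.castLE hn 0) + 2 * z (Fin.castLE hn 1)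
          + 3 * z (Fin.castLE hn 2) - 3)
        = (1 + (z (Fin.castLE hn 2) - 1)) * M' := by rw [hMdef]; ring
    apply sandwich _ _ hz0
    · exact (real_e ‖z (Fin.castLE hn 2) - 1‖ ‖z (Fin.castLE hn 0)‖ ‖z (Fin.castLE hn 1)‖ _ ‖z - P‖
        ‖M'‖ ‖1 + (z (Fin.castLE hn 2) - 1)‖ ‖M' + 2‖ ‖M' + 1‖
        (‖1 + (z (Fin.castLE hn 2) - 1)‖ * ‖M'‖) (‖z (Fin.castLE hn 0)‖ * ‖M' + 2‖)
        (‖z (Fin.castLE hn 1)‖ * ‖M' + 1‖) _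
        (norm_nonneg _) (norm_nonneg _) (norm_nonneg _) hT (norm_nonneg _)
        (by linarith) hC (le_of_lt hzr) hM6 hVtri hEl hEu
        (by linarith) (by linarith) (by linarith) (by linarith)
        rfl rfl rfl
        (by rw [sum3 hn z, e1, e2, e3, norm_mul, norm_mul, norm_mul]; ring)).1
    · exact (real_e ‖z (Fin.castLE hn 2) - 1‖ ‖z (Fin.castLE hn 0)‖ ‖z (Fin.castLE hn 1)‖ _ ‖z - P‖
        ‖M'‖ ‖1 + (z (Fin.castLE hn 2) - 1)‖ ‖M' + 2‖ ‖M' + 1‖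
        (‖1 + (z (Fin.castLE hn 2) - 1)‖ * ‖M'‖) (‖z (Fin.castLE hn 0)‖ * ‖M' + 2‖)
        (‖z (Fin.castLE hn 1)‖ * ‖M' + 1‖) _
        (norm_nonneg _) (norm_nonneg _) (norm_nonneg _) hT (norm_nonneg _)
        (by linarith) hC (le_of_lt hzr) hM6 hVtri hEl hEu
        (by linarith) (by linarith) (by linarith) (by linarith)
        rfl rfl rfl
        (by rw [sum3 hn z, e1, e2, e3, norm_mul, norm_mul, norm_mul]; ring)).2
end

section
/- Let p₁, …, p₇ be seven distinct points of ℂ² such that no four of them are collinear, every nonzero polynomial in ℂ[x, y] of total degree at most 2 vanishes at no more than 5 of them, the points p₁, p₂, p₃ are collinear, and the points p₁, p₄, p₅ are collinear. Then there exist indices i, j, k ∈ {1, …, 7} such that p_i, p_j, p_k are not collinear and none of the remaining four points lies on any of the three complex affine lines determined by the pairs (p_i, p_j), (p_j, p_k), (p_k, p_i). -/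
noncomputable section




/-- Signed area determinant of three points of `ℂ²`. -/
def dt (q r s : Fin 2 → ℂ) : ℂ :=
  (r 0 - q 0) * (s 1 - q 1) - (r 1 - q 1) * (s 0 - q 0)

lemma col_swap {x y z : Fin 2 → ℂ} (h : Collinear ℂ ({x, y, z} : Set (Fin 2 → ℂ))) :
    Collinear ℂ ({y, x, z} : Set (Fin 2 → ℂ)) := by
  rwa [Set.insert_comm] at h

lemma col_rot {x y z : Fin 2 → ℂ} (h : Collinear ℂ ({x, y, z} : Set (Fin 2 → ℂ))) :
    Collinear ℂ ({y, z, x} : Set (Fin 2 → ℂ)) := by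
  have : ({y, z, x} : Set (Fin 2 → ℂ)) = {x, y, z} := by
    ext w; simp only [Set.mem_insert_iff, Set.mem_singleton_iff]; tauto
  rwa [this]

lemma vec_dep (v z : Fin 2 → ℂ) (hv : v ≠ 0) (h : v 0 * z 1 - v 1 * z 0 = 0) :
    ∃ a : ℂ, z = a • v := by
  by_cases h0 : v 0 = 0
  · have h1 : v 1 ≠ 0 := by
      intro h1
      apply hv
      funext i
      fin_cases i <;> simp [h0, h1]
    refine ⟨z 1 / v 1, funext fun i => ?_⟩
    fin_cases i
    · have hz0 : z 0 = 0 := by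
        have h' := h
        rw [h0] at h'
        simp only [zero_mul, zero_sub, neg_eq_zero, mul_eq_zero] at h'
        tauto
      simp [hz0, h0]
    · simp [div_mul_cancel₀ _ h1]
  · refine ⟨z 0 / v 0, funext fun i => ?_⟩
    fin_cases i
    · simp [div_mul_cancel₀ _ h0]
    · show z 1 = z 0 / v 0 * v 1
      rw [div_mul_eq_mul_div, eq_div_iff h0]
      linear_combination h

lemma dt_eq_zero_of_collinear {q r s : Fin 2 → ℂ}
    (h : Collinear ℂ ({q, r, s} : Set (Fin 2 → ℂ))) : dt q r s = 0 := by
  rw [collinear_iff_of_mem (Set.mem_insert q {r, s})] at h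
  obtain ⟨v, hv⟩ := h
  obtain ⟨ar, har⟩ := hv r (by simp)
  obtain ⟨as, has⟩ := hv s (by simp)
  have hr0 : r 0 = ar * v 0 + q 0 := by rw [har]; simp
  have hr1 : r 1 = ar * v 1 + q 1 := by rw [har]; simp
  have hs0 : s 0 = as * v 0 + q 0 := by rw [has]; simp
  have hs1 : s 1 = as * v 1 + q 1 := by rw [has]; simp
  unfold dt
  rw [hr0, hr1, hs0, hs1]
  ring

lemma collinear_of_dt_eq_zero {q r s : Fin 2 → ℂ} (h : dt q r s = 0) :
    Collinear ℂ ({q, r, s} : Set (Fin 2 → ℂ)) := by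
  by_cases hqr : r = q
  · subst hqr
    have : ({r, r, s} : Set (Fin 2 → ℂ)) = {r, s} := by simp
    rw [this]
    exact collinear_pair ℂ r s
  · have hv : r - q ≠ 0 := sub_ne_zero.mpr hqr
    obtain ⟨a, ha⟩ := vec_dep (r - q) (s - q) hv (by
      have : (r - q) 0 = r 0 - q 0 := rfl
      have h2 : (r - q) 1 = r 1 - q 1 := rfl
      have h3 : (s - q) 0 = s 0 - q 0 := rfl
      have h4 : (s - q) 1 = s 1 - q 1 := rfl
      rw [this, h2, h3, h4]
      unfold dt at h
      linear_combination h)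
    rw [collinear_iff_of_mem (Set.mem_insert q {r, s})]
    refine ⟨r - q, fun x hx => ?_⟩
    simp only [Set.mem_insert_iff, Set.mem_singleton_iff] at hx
    rcases hx with rfl | rfl | rfl
    · exact ⟨0, by simp⟩
    · exact ⟨1, by simp⟩
    · exact ⟨a, by rw [← ha]; simp⟩



open MvPolynomial


lemma dt_self1 (q r : Fin 2 → ℂ) : dt q r q = 0 := by unfold dt; ring
lemma dt_self2 (q r : Fin 2 → ℂ) : dt q r r = 0 := by unfold dt; ring

def linePoly (q r : Fin 2 → ℂ) : MvPolynomial (Fin 2) ℂ :=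
  C (-(r 1 - q 1)) * X 0 + C (r 0 - q 0) * X 1 +
    C ((r 1 - q 1) * q 0 - (r 0 - q 0) * q 1)

lemma eval_linePoly (q r z : Fin 2 → ℂ) : eval z (linePoly q r) = dt q r z := by
  simp [linePoly, dt]; ring

lemma linePoly_ne_zero {q r : Fin 2 → ℂ} (h : q ≠ r) : linePoly q r ≠ 0 := by
  intro h0
  have hex : ∃ i, q i ≠ r i := by
    by_contra hc; push_neg at hc; exact h (funext hc)
  obtain ⟨i, hi⟩ := hex
  fin_cases i
  · have h1 := congrArg (eval ![q 0, q 1 + 1]) h0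
    rw [eval_linePoly] at h1
    simp only [dt, Matrix.cons_val_zero, Matrix.cons_val_one, Matrix.head_cons, map_zero] at h1
    apply hi
    have h2 : r 0 - q 0 = 0 := by linear_combination h1
    exact (sub_eq_zero.mp h2).symm
  · have h1 := congrArg (eval ![q 0 + 1, q 1]) h0
    rw [eval_linePoly] at h1
    simp only [dt, Matrix.cons_val_zero, Matrix.cons_val_one, Matrix.head_cons, map_zero] at h1
    apply hi
    have h2 : r 1 - q 1 = 0 := by linear_combination -h1
    exact (sub_eq_zero.mp h2).symm

lemma linePoly_totalDegree (q r : Fin 2 → ℂ) : (linePoly q r).totalDegree ≤ 1 := by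
  refine le_trans (totalDegree_add _ _) (max_le (le_trans (totalDegree_add _ _) (max_le ?_ ?_)) ?_)
  · refine le_trans (totalDegree_mul _ _) ?_
    rw [totalDegree_C, totalDegree_X]
  · refine le_trans (totalDegree_mul _ _) ?_
    rw [totalDegree_C, totalDegree_X]
  · rw [totalDegree_C]
    norm_num





lemma dt_param {x y z : Fin 2 → ℂ} (hxy : x ≠ y) (hd : dt x y z = 0) :
    ∃ m : ℂ, z 0 - x 0 = m * (y 0 - x 0) ∧ z 1 - x 1 = m * (y 1 - x 1) := by
  obtain ⟨m, hm⟩ := vec_dep (y - x) (z - x) (sub_ne_zero.mpr (Ne.symm hxy)) (by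
    show (y - x) 0 * (z - x) 1 - (y - x) 1 * (z - x) 0 = 0
    simp only [Pi.sub_apply]
    unfold dt at hd
    linear_combination hd)
  refine ⟨m, ?_, ?_⟩
  · have := congrFun hm 0
    simpa using this
  · have := congrFun hm 1
    simpa using this

lemma fano_contra (q0 q1 q2 q3 q4 q5 q6 : Fin 2 → ℂ)
    (h12 : q1 ≠ q2) (h13 : q1 ≠ q3) (h15 : q1 ≠ q5) (h35 : q3 ≠ q5) (h34 : q3 ≠ q4)
    (h56 : q5 ≠ q6) (h01 : q0 ≠ q1) (h23 : q2 ≠ q3) (h25 : q2 ≠ q5) (h45 : q4 ≠ q5)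
    (hnd : dt q1 q3 q5 ≠ 0)
    (l1 : dt q1 q2 q0 = 0) (l2 : dt q3 q4 q0 = 0) (l3 : dt q5 q6 q0 = 0)
    (l4 : dt q1 q3 q6 = 0) (l5 : dt q1 q5 q4 = 0) (l6 : dt q3 q5 q2 = 0)
    (l7 : dt q2 q4 q6 = 0) : False := by
  obtain ⟨a, ha0, ha1⟩ := dt_param h13 l4
  obtain ⟨b, hb0, hb1⟩ := dt_param h15 l5
  obtain ⟨c, hc0, hc1⟩ := dt_param h35 l6
  obtain ⟨s, hs0, hs1⟩ := dt_param h12 l1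
  obtain ⟨r, hr0, hr1⟩ := dt_param h34 l2
  obtain ⟨t, ht0, ht1⟩ := dt_param h56 l3
  unfold dt at hnd l7
  -- nonzero scalars
  have hsne : s ≠ 0 := by
    intro h
    rw [h, zero_mul] at hs0 hs1
    exact h01 (funext fun i => by
      fin_cases i
      · show q0 0 = q1 0; linear_combination hs0
      · show q0 1 = q1 1; linear_combination hs1)
  have hcne : c ≠ 0 := by
    intro h
    rw [h, zero_mul] at hc0 hc1
    exact h23 (funext fun i => by
      fin_cases i
      · show q2 0 = q3 0; linear_combination hc0
      · show q2 1 = q3 1; linear_combination hc1)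
  have hcne1 : (1 : ℂ) - c ≠ 0 := by
    intro h
    have hc : c = 1 := by linear_combination -h
    rw [hc, one_mul] at hc0 hc1
    exact h25 (funext fun i => by
      fin_cases i
      · show q2 0 = q5 0; linear_combination hc0
      · show q2 1 = q5 1; linear_combination hc1)
  have hbne1 : b - 1 ≠ 0 := by
    intro h
    have hb : b = 1 := by linear_combination h
    rw [hb, one_mul] at hb0 hb1
    exact h45 (funext fun i => by
      fin_cases i
      · show q4 0 = q5 0; linear_combination hb0 - hb0 + hb0
      · show q4 1 = q5 1; linear_combination hb1)
  -- coefficient equations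
  have hA0 : q0 0 - q1 0 = s*(1-c)*(q3 0 - q1 0) + s*c*(q5 0 - q1 0) := by
    linear_combination hs0 + s*hc0
  have hA1 : q0 1 - q1 1 = s*(1-c)*(q3 1 - q1 1) + s*c*(q5 1 - q1 1) := by
    linear_combination hs1 + s*hc1
  have HR0 : (s*(1-c) - (1-r))*(q3 0 - q1 0) + (s*c - r*b)*(q5 0 - q1 0) = 0 := by
    linear_combination hr0 + r*hb0 - hA0
  have HR1 : (s*(1-c) - (1-r))*(q3 1 - q1 1) + (s*c - r*b)*(q5 1 - q1 1) = 0 := by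
    linear_combination hr1 + r*hb1 - hA1
  have HT0 : (s*(1-c) - t*a)*(q3 0 - q1 0) + (s*c - (1-t))*(q5 0 - q1 0) = 0 := by
    linear_combination ht0 + t*ha0 - hA0
  have HT1 : (s*(1-c) - t*a)*(q3 1 - q1 1) + (s*c - (1-t))*(q5 1 - q1 1) = 0 := by
    linear_combination ht1 + t*ha1 - hA1
  set D : ℂ := (q3 0 - q1 0) * (q5 1 - q1 1) - (q3 1 - q1 1) * (q5 0 - q1 0) with hD
  have E1 : s*(1-c) - (1-r) = 0 := by
    have h' : (s*(1-c) - (1-r)) * D = 0 := by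
      rw [hD]; linear_combination (q5 1 - q1 1)*HR0 - (q5 0 - q1 0)*HR1
    exact (mul_eq_zero.mp h').resolve_right hnd
  have E3 : s*c - r*b = 0 := by
    have h' : (s*c - r*b) * D = 0 := by
      rw [hD]; linear_combination (q3 0 - q1 0)*HR1 - (q3 1 - q1 1)*HR0
    exact (mul_eq_zero.mp h').resolve_right hnd
  have E2 : s*(1-c) - t*a = 0 := by
    have h' : (s*(1-c) - t*a) * D = 0 := by
      rw [hD]; linear_combination (q5 1 - q1 1)*HT0 - (q5 0 - q1 0)*HT1
    exact (mul_eq_zero.mp h').resolve_right hnd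
  have E4 : s*c - (1-t) = 0 := by
    have h' : (s*c - (1-t)) * D = 0 := by
      rw [hD]; linear_combination (q3 0 - q1 0)*HT1 - (q3 1 - q1 1)*HT0
    exact (mul_eq_zero.mp h').resolve_right hnd
  have G3 : c*(1-c) - (b-c)*(a-1+c) = 0 := by
    have h' : (c*(1-c) - (b-c)*(a-1+c)) * D = 0 := by
      rw [hD]
      linear_combination l7 - ((b-c)*(q5 0 - q1 0) - (1-c)*(q3 0 - q1 0))*ha1
        + ((b-c)*(q5 0 - q1 0) - (1-c)*(q3 0 - q1 0))*hc1
        - (q6 1 - q2 1)*hb0 + (q6 1 - q2 1)*hc0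
        + ((b-c)*(q5 1 - q1 1) - (1-c)*(q3 1 - q1 1))*ha0
        - ((b-c)*(q5 1 - q1 1) - (1-c)*(q3 1 - q1 1))*hc0
        + (q6 0 - q2 0)*hb1 - (q6 0 - q2 0)*hc1
    exact (mul_eq_zero.mp h').resolve_right hnd
  have key : s*c*(b-1)*(1-c) = 0 := by
    linear_combination ((-t)*G3 + (b-c)*E2 + b*(1-c)*E4 - (1-c)*b*E1 - (1-c)*E3)/2
  exact mul_ne_zero (mul_ne_zero (mul_ne_zero hsne hcne) hbne1) hcne1 key

abbrev Col3 (p : Fin 7 → Fin 2 → ℂ) (a b c : Fin 7) : Prop :=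
  Collinear ℂ ({p a, p b, p c} : Set (Fin 2 → ℂ))

end

/-- Property (P) from Case 2(ii) of the proof of Proposition 2.3: given seven distinct
points of `ℂ²`, no four collinear, no conic through six of them, with `p₁, p₂, p₃`
collinear and `p₁, p₄, p₅` collinear, there are three non-collinear points `p_i, p_j, p_k`
such that none of the remaining four points lies on any of the three lines they
determine. -/
theorem entire_green_statement_9 (p : Fin 7 → Fin 2 → ℂ) (hinj : Function.Injective p)
    (h4 : ∀ a b c d : Fin 7, a ≠ b → a ≠ c → a ≠ d → b ≠ c → b ≠ d → c ≠ d →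
      ¬ Collinear ℂ ({p a, p b, p c, p d} : Set (Fin 2 → ℂ)))
    (hconic : ∀ Q : MvPolynomial (Fin 2) ℂ, Q ≠ 0 → Q.totalDegree ≤ 2 →
      {i : Fin 7 | MvPolynomial.eval (p i) Q = 0}.ncard ≤ 5)
    (h123 : Collinear ℂ ({p 0, p 1, p 2} : Set (Fin 2 → ℂ)))
    (h145 : Collinear ℂ ({p 0, p 3, p 4} : Set (Fin 2 → ℂ))) :
    ∃ i j k : Fin 7, i ≠ j ∧ i ≠ k ∧ j ≠ k ∧
      ¬ Collinear ℂ ({p i, p j, p k} : Set (Fin 2 → ℂ)) ∧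
      ∀ l : Fin 7, l ≠ i → l ≠ j → l ≠ k →
        p l ∉ affineSpan ℂ ({p i, p j} : Set (Fin 2 → ℂ)) ∧
        p l ∉ affineSpan ℂ ({p j, p k} : Set (Fin 2 → ℂ)) ∧
        p l ∉ affineSpan ℂ ({p k, p i} : Set (Fin 2 → ℂ)) := by

  by_contra hgoal
  have hne : ∀ a b : Fin 7, a ≠ b → p a ≠ p b := fun a b hab h => hab (hinj h)
  have hF1 : ∀ a b c d : Fin 7, (a ≠ b ∧ a ≠ c ∧ a ≠ d ∧ b ≠ c ∧ b ≠ d ∧ c ≠ d) →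
      Col3 p a b c → Col3 p a b d → False := by
    rintro a b c d ⟨hab, hac, had, hbc, hbd, hcd⟩ h1 h2
    have hcm : p c ∈ affineSpan ℂ ({p a, p b} : Set (Fin 2 → ℂ)) :=
      Collinear.mem_affineSpan_of_mem_of_ne h1 (by simp) (by simp) (by simp) (hne a b hab)
    have hdm : p d ∈ affineSpan ℂ ({p a, p b} : Set (Fin 2 → ℂ)) :=
      Collinear.mem_affineSpan_of_mem_of_ne h2 (by simp) (by simp) (by simp) (hne a b hab)
    exact h4 c d a b hcd (Ne.symm hac) (Ne.symm hbc) (Ne.symm had) (Ne.symm hbd) hab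
      (collinear_insert_insert_of_mem_affineSpan_pair hcm hdm)
  have hF2 : ∀ a b c d e f : Fin 7, (a ≠ b ∧ a ≠ c ∧ a ≠ d ∧ a ≠ e ∧ a ≠ f ∧ b ≠ c ∧ b ≠ d ∧
      b ≠ e ∧ b ≠ f ∧ c ≠ d ∧ c ≠ e ∧ c ≠ f ∧ d ≠ e ∧ d ≠ f ∧ e ≠ f) →
      Col3 p a b c → Col3 p d e f → False := by
    rintro a b c d e f ⟨hab, hac, had, hae, haf, hbc, hbd, hbe, hbf, hcd, hce, hcf, hde, hdf, hef⟩ hc1 hc2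
    have hQ := hconic (linePoly (p a) (p b) * linePoly (p d) (p e))
      (mul_ne_zero (linePoly_ne_zero (hne a b hab)) (linePoly_ne_zero (hne d e hde)))
      (le_trans (MvPolynomial.totalDegree_mul _ _)
        (add_le_add (linePoly_totalDegree _ _) (linePoly_totalDegree _ _)))
    have hsub : ({a, b, c, d, e, f} : Set (Fin 7)) ⊆
        {i : Fin 7 | MvPolynomial.eval (p i) (linePoly (p a) (p b) * linePoly (p d) (p e)) = 0} := by
      intro x hx
      simp only [Set.mem_insert_iff, Set.mem_singleton_iff] at hx
      simp only [Set.mem_setOf_eq, map_mul, eval_linePoly]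
      rcases hx with rfl | rfl | rfl | rfl | rfl | rfl
      · rw [dt_self1, zero_mul]
      · rw [dt_self2, zero_mul]
      · rw [dt_eq_zero_of_collinear hc1, zero_mul]
      · rw [dt_self1, mul_zero]
      · rw [dt_self2, mul_zero]
      · rw [dt_eq_zero_of_collinear hc2, mul_zero]
    have hm1 : a ∉ ({b, c, d, e, f} : Set (Fin 7)) := by
      simp only [Set.mem_insert_iff, Set.mem_singleton_iff]
      push_neg
      exact ⟨hab, hac, had, hae, haf⟩
    have hm2 : b ∉ ({c, d, e, f} : Set (Fin 7)) := by
      simp only [Set.mem_insert_iff, Set.mem_singleton_iff]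
      push_neg
      exact ⟨hbc, hbd, hbe, hbf⟩
    have hm3 : c ∉ ({d, e, f} : Set (Fin 7)) := by
      simp only [Set.mem_insert_iff, Set.mem_singleton_iff]
      push_neg
      exact ⟨hcd, hce, hcf⟩
    have hm4 : d ∉ ({e, f} : Set (Fin 7)) := by
      simp only [Set.mem_insert_iff, Set.mem_singleton_iff]
      push_neg
      exact ⟨hde, hdf⟩
    have hm5 : e ∉ ({f} : Set (Fin 7)) := by
      simp only [Set.mem_singleton_iff]
      exact hef
    have hcard : ({a, b, c, d, e, f} : Set (Fin 7)).ncard = 6 := by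
      rw [Set.ncard_insert_of_notMem hm1 (Set.toFinite _),
          Set.ncard_insert_of_notMem hm2 (Set.toFinite _),
          Set.ncard_insert_of_notMem hm3 (Set.toFinite _),
          Set.ncard_insert_of_notMem hm4 (Set.toFinite _),
          Set.ncard_insert_of_notMem hm5 (Set.toFinite _), Set.ncard_singleton]
    have hle := Set.ncard_le_ncard hsub (Set.toFinite _)
    rw [hcard] at hle
    omega
  have hB : ∀ i j k : Fin 7, (i ≠ j ∧ i ≠ k ∧ j ≠ k) →
      (∃ c, c ≠ i ∧ c ≠ j ∧ Col3 p i j c) ∨ (∃ c, c ≠ j ∧ c ≠ k ∧ Col3 p j k c) ∨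
      (∃ c, c ≠ k ∧ c ≠ i ∧ Col3 p k i c) := by
    rintro i j k ⟨hij, hik, hjk⟩
    by_contra hcon
    push_neg at hcon
    obtain ⟨c1, c2, c3⟩ := hcon
    refine hgoal ⟨i, j, k, hij, hik, hjk, fun hcol => c1 k (Ne.symm hik) (Ne.symm hjk) hcol,
      fun l hli hlj hlk => ⟨fun hm => ?_, fun hm => ?_, fun hm => ?_⟩⟩
    · exact c1 l hli hlj (col_rot (collinear_insert_of_mem_affineSpan_pair hm))
    · exact c2 l hlj hlk (col_rot (collinear_insert_of_mem_affineSpan_pair hm))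
    · exact c3 l hlk hli (col_rot (collinear_insert_of_mem_affineSpan_pair hm))
  have K0 : Col3 p 0 1 2 := h123
  have K1 : Col3 p 0 3 4 := h145
  have tp05 : (∃ c : Fin 7, c ≠ 0 ∧ c ≠ 5 ∧ Col3 p 0 5 c) → Col3 p 0 5 6 := by
    rintro ⟨c, hc1, hc2, hcol⟩
    fin_cases c
    · exact absurd rfl hc1
    · exact (hF1 0 1 5 2 (by decide) (col_rot (col_swap hcol)) (K0)).elim
    · exact (hF1 0 2 5 1 (by decide) (col_rot (col_swap hcol)) (col_rot (col_swap K0))).elim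
    · exact (hF1 0 3 5 4 (by decide) (col_rot (col_swap hcol)) (K1)).elim
    · exact (hF1 0 4 5 3 (by decide) (col_rot (col_swap hcol)) (col_rot (col_swap K1))).elim
    · exact absurd rfl hc2
    · exact hcol
  have tp56 : (∃ c : Fin 7, c ≠ 5 ∧ c ≠ 6 ∧ Col3 p 5 6 c) → Col3 p 5 6 0 := by
    rintro ⟨c, hc1, hc2, hcol⟩
    fin_cases c
    · exact hcol
    · exact (hF2 5 6 1 0 3 4 (by decide) hcol K1).elim
    · exact (hF2 5 6 2 0 3 4 (by decide) hcol K1).elim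
    · exact (hF2 5 6 3 0 1 2 (by decide) hcol K0).elim
    · exact (hF2 5 6 4 0 1 2 (by decide) hcol K0).elim
    · exact absurd rfl hc1
    · exact absurd rfl hc2
  have tp60 : (∃ c : Fin 7, c ≠ 6 ∧ c ≠ 0 ∧ Col3 p 6 0 c) → Col3 p 6 0 5 := by
    rintro ⟨c, hc1, hc2, hcol⟩
    fin_cases c
    · exact absurd rfl hc2
    · exact (hF1 0 1 6 2 (by decide) (col_rot hcol) (K0)).elim
    · exact (hF1 0 2 6 1 (by decide) (col_rot hcol) (col_rot (col_swap K0))).elim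
    · exact (hF1 0 3 6 4 (by decide) (col_rot hcol) (K1)).elim
    · exact (hF1 0 4 6 3 (by decide) (col_rot hcol) (col_rot (col_swap K1))).elim
    · exact hcol
    · exact absurd rfl hc1
  have tp13 : (∃ c : Fin 7, c ≠ 1 ∧ c ≠ 3 ∧ Col3 p 1 3 c) → Col3 p 1 3 5 ∨ Col3 p 1 3 6 := by
    rintro ⟨c, hc1, hc2, hcol⟩
    fin_cases c
    · exact (hF1 0 1 3 2 (by decide) (col_rot (col_rot hcol)) (K0)).elim
    · exact absurd rfl hc1
    · exact (hF1 1 2 3 0 (by decide) (col_rot (col_swap hcol)) (col_rot K0)).elim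
    · exact absurd rfl hc2
    · exact (hF1 3 4 1 0 (by decide) (col_rot hcol) (col_rot K1)).elim
    · exact Or.inl hcol
    · exact Or.inr hcol
  have tp35 : (∃ c : Fin 7, c ≠ 3 ∧ c ≠ 5 ∧ Col3 p 3 5 c) → Col3 p 3 5 1 ∨ Col3 p 3 5 2 := by
    rintro ⟨c, hc1, hc2, hcol⟩
    fin_cases c
    · exact (hF1 0 3 5 4 (by decide) (col_rot (col_rot hcol)) (K1)).elim
    · exact Or.inl hcol
    · exact Or.inr hcol
    · exact absurd rfl hc1
    · exact (hF2 3 5 4 0 1 2 (by decide) hcol K0).elim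
    · exact absurd rfl hc2
    · exact (hF2 3 5 6 0 1 2 (by decide) hcol K0).elim
  have tp51 : (∃ c : Fin 7, c ≠ 5 ∧ c ≠ 1 ∧ Col3 p 5 1 c) → Col3 p 5 1 3 ∨ Col3 p 5 1 4 := by
    rintro ⟨c, hc1, hc2, hcol⟩
    fin_cases c
    · exact (hF1 0 1 5 2 (by decide) (col_swap (col_rot hcol)) (K0)).elim
    · exact absurd rfl hc2
    · exact (hF2 5 1 2 0 3 4 (by decide) hcol K1).elim
    · exact Or.inl hcol
    · exact Or.inr hcol
    · exact absurd rfl hc1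
    · exact (hF2 5 1 6 0 3 4 (by decide) hcol K1).elim
  have tp14 : (∃ c : Fin 7, c ≠ 1 ∧ c ≠ 4 ∧ Col3 p 1 4 c) → Col3 p 1 4 5 ∨ Col3 p 1 4 6 := by
    rintro ⟨c, hc1, hc2, hcol⟩
    fin_cases c
    · exact (hF1 0 1 4 2 (by decide) (col_rot (col_rot hcol)) (K0)).elim
    · exact absurd rfl hc1
    · exact (hF1 1 2 4 0 (by decide) (col_rot (col_swap hcol)) (col_rot K0)).elim
    · exact (hF1 3 4 1 0 (by decide) (col_swap (col_rot hcol)) (col_rot K1)).elim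
    · exact absurd rfl hc2
    · exact Or.inl hcol
    · exact Or.inr hcol
  have tp46 : (∃ c : Fin 7, c ≠ 4 ∧ c ≠ 6 ∧ Col3 p 4 6 c) → Col3 p 4 6 1 ∨ Col3 p 4 6 2 := by
    rintro ⟨c, hc1, hc2, hcol⟩
    fin_cases c
    · exact (hF1 0 4 6 3 (by decide) (col_rot (col_rot hcol)) (col_rot (col_swap K1))).elim
    · exact Or.inl hcol
    · exact Or.inr hcol
    · exact (hF2 4 6 3 0 1 2 (by decide) hcol K0).elim
    · exact absurd rfl hc1
    · exact (hF2 4 6 5 0 1 2 (by decide) hcol K0).elim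
    · exact absurd rfl hc2
  have tp61 : (∃ c : Fin 7, c ≠ 6 ∧ c ≠ 1 ∧ Col3 p 6 1 c) → Col3 p 6 1 3 ∨ Col3 p 6 1 4 := by
    rintro ⟨c, hc1, hc2, hcol⟩
    fin_cases c
    · exact (hF1 0 1 6 2 (by decide) (col_swap (col_rot hcol)) (K0)).elim
    · exact absurd rfl hc2
    · exact (hF2 6 1 2 0 3 4 (by decide) hcol K1).elim
    · exact Or.inl hcol
    · exact Or.inr hcol
    · exact (hF2 6 1 5 0 3 4 (by decide) hcol K1).elim
    · exact absurd rfl hc1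
  have tp23 : (∃ c : Fin 7, c ≠ 2 ∧ c ≠ 3 ∧ Col3 p 2 3 c) → Col3 p 2 3 5 ∨ Col3 p 2 3 6 := by
    rintro ⟨c, hc1, hc2, hcol⟩
    fin_cases c
    · exact (hF1 0 2 3 1 (by decide) (col_rot (col_rot hcol)) (col_rot (col_swap K0))).elim
    · exact (hF1 1 2 3 0 (by decide) (col_rot (col_rot hcol)) (col_rot K0)).elim
    · exact absurd rfl hc1
    · exact absurd rfl hc2
    · exact (hF1 3 4 2 0 (by decide) (col_rot hcol) (col_rot K1)).elim
    · exact Or.inl hcol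
    · exact Or.inr hcol
  have tp36 : (∃ c : Fin 7, c ≠ 3 ∧ c ≠ 6 ∧ Col3 p 3 6 c) → Col3 p 3 6 1 ∨ Col3 p 3 6 2 := by
    rintro ⟨c, hc1, hc2, hcol⟩
    fin_cases c
    · exact (hF1 0 3 6 4 (by decide) (col_rot (col_rot hcol)) (K1)).elim
    · exact Or.inl hcol
    · exact Or.inr hcol
    · exact absurd rfl hc1
    · exact (hF2 3 6 4 0 1 2 (by decide) hcol K0).elim
    · exact (hF2 3 6 5 0 1 2 (by decide) hcol K0).elim
    · exact absurd rfl hc2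
  have tp62 : (∃ c : Fin 7, c ≠ 6 ∧ c ≠ 2 ∧ Col3 p 6 2 c) → Col3 p 6 2 3 ∨ Col3 p 6 2 4 := by
    rintro ⟨c, hc1, hc2, hcol⟩
    fin_cases c
    · exact (hF1 0 2 6 1 (by decide) (col_swap (col_rot hcol)) (col_rot (col_swap K0))).elim
    · exact (hF2 6 2 1 0 3 4 (by decide) hcol K1).elim
    · exact absurd rfl hc2
    · exact Or.inl hcol
    · exact Or.inr hcol
    · exact (hF2 6 2 5 0 3 4 (by decide) hcol K1).elim
    · exact absurd rfl hc1
  have tp24 : (∃ c : Fin 7, c ≠ 2 ∧ c ≠ 4 ∧ Col3 p 2 4 c) → Col3 p 2 4 5 ∨ Col3 p 2 4 6 := by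
    rintro ⟨c, hc1, hc2, hcol⟩
    fin_cases c
    · exact (hF1 0 2 4 1 (by decide) (col_rot (col_rot hcol)) (col_rot (col_swap K0))).elim
    · exact (hF1 1 2 4 0 (by decide) (col_rot (col_rot hcol)) (col_rot K0)).elim
    · exact absurd rfl hc1
    · exact (hF1 3 4 2 0 (by decide) (col_swap (col_rot hcol)) (col_rot K1)).elim
    · exact absurd rfl hc2
    · exact Or.inl hcol
    · exact Or.inr hcol
  have tp45 : (∃ c : Fin 7, c ≠ 4 ∧ c ≠ 5 ∧ Col3 p 4 5 c) → Col3 p 4 5 1 ∨ Col3 p 4 5 2 := by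
    rintro ⟨c, hc1, hc2, hcol⟩
    fin_cases c
    · exact (hF1 0 4 5 3 (by decide) (col_rot (col_rot hcol)) (col_rot (col_swap K1))).elim
    · exact Or.inl hcol
    · exact Or.inr hcol
    · exact (hF2 4 5 3 0 1 2 (by decide) hcol K0).elim
    · exact absurd rfl hc1
    · exact absurd rfl hc2
    · exact (hF2 4 5 6 0 1 2 (by decide) hcol K0).elim
  have tp52 : (∃ c : Fin 7, c ≠ 5 ∧ c ≠ 2 ∧ Col3 p 5 2 c) → Col3 p 5 2 3 ∨ Col3 p 5 2 4 := by
    rintro ⟨c, hc1, hc2, hcol⟩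
    fin_cases c
    · exact (hF1 0 2 5 1 (by decide) (col_swap (col_rot hcol)) (col_rot (col_swap K0))).elim
    · exact (hF2 5 2 1 0 3 4 (by decide) hcol K1).elim
    · exact absurd rfl hc2
    · exact Or.inl hcol
    · exact Or.inr hcol
    · exact absurd rfl hc1
    · exact (hF2 5 2 6 0 3 4 (by decide) hcol K1).elim
  have K2 : Col3 p 0 5 6 := by
    rcases hB 0 5 6 (by decide) with bad | bad | bad
    · exact tp05 bad
    · exact col_rot (col_rot (tp56 bad))
    · exact col_rot (tp60 bad)
  have H4 : Col3 p 1 3 5 ∨ Col3 p 1 3 6 ∨ Col3 p 2 3 5 ∨ Col3 p 1 4 5 := by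
    rcases hB 1 3 5 (by decide) with bad | bad | bad
    · rcases tp13 bad with h | h
      · exact Or.inl h
      · exact Or.inr (Or.inl h)
    · rcases tp35 bad with h | h
      · exact Or.inl (col_rot (col_rot h))
      · exact Or.inr (Or.inr (Or.inl (col_rot (col_rot h))))
    · rcases tp51 bad with h | h
      · exact Or.inl (col_rot h)
      · exact Or.inr (Or.inr (Or.inr (col_rot h)))
  rcases H4 with T | T | T | T
  · -- case T = Col3 p 1 3 5
    have W0 : Col3 p 1 4 6 := by
      rcases hB 1 4 6 (by decide) with bad | bad | bad
      · rcases tp14 bad with h | h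
        · exact (hF1 1 5 4 3 (by decide) (col_rot (col_swap h)) (col_rot (col_swap T))).elim
        · exact h
      · rcases tp46 bad with h | h
        · exact col_rot (col_rot h)
        · exact (hF2 4 6 2 1 3 5 (by decide) h T).elim
      · rcases tp61 bad with h | h
        · exact (hF1 1 3 6 5 (by decide) (col_rot h) (T)).elim
        · exact col_rot h
    have W1 : Col3 p 2 3 6 := by
      rcases hB 2 3 6 (by decide) with bad | bad | bad
      · rcases tp23 bad with h | h
        · exact (hF2 2 3 5 1 4 6 (by decide) h W0).elim
        · exact h
      · rcases tp36 bad with h | h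
        · exact (hF1 1 3 6 5 (by decide) (col_rot (col_rot h)) (T)).elim
        · exact col_rot (col_rot h)
      · rcases tp62 bad with h | h
        · exact col_rot h
        · exact (hF2 6 2 4 1 3 5 (by decide) h T).elim
    have W2 : Col3 p 2 4 5 := by
      rcases hB 2 4 5 (by decide) with bad | bad | bad
      · rcases tp24 bad with h | h
        · exact h
        · exact (hF2 2 4 6 1 3 5 (by decide) h T).elim
      · rcases tp45 bad with h | h
        · exact (hF2 4 5 1 2 3 6 (by decide) h W1).elim
        · exact col_rot (col_rot h)
      · rcases tp52 bad with h | h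
        · exact (hF2 5 2 3 1 4 6 (by decide) h W0).elim
        · exact col_rot h
    exact fano_contra (p 0) (p 1) (p 2) (p 3) (p 4) (p 6) (p 5)
      (hne 1 2 (by decide)) (hne 1 3 (by decide)) (hne 1 6 (by decide)) (hne 3 6 (by decide)) (hne 3 4 (by decide)) (hne 6 5 (by decide)) (hne 0 1 (by decide)) (hne 2 3 (by decide)) (hne 2 6 (by decide)) (hne 4 6 (by decide))
      (fun hd => hF1 1 3 6 5 (by decide) ((collinear_of_dt_eq_zero hd)) (T))
      (dt_eq_zero_of_collinear (col_rot K0)) (dt_eq_zero_of_collinear (col_rot K1)) (dt_eq_zero_of_collinear (col_swap (col_rot K2))) (dt_eq_zero_of_collinear (T)) (dt_eq_zero_of_collinear (col_rot (col_swap W0))) (dt_eq_zero_of_collinear (col_rot W1)) (dt_eq_zero_of_collinear (W2))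
  · -- case T = Col3 p 1 3 6
    have W0 : Col3 p 1 4 5 := by
      rcases hB 1 4 5 (by decide) with bad | bad | bad
      · rcases tp14 bad with h | h
        · exact h
        · exact (hF1 1 6 4 3 (by decide) (col_rot (col_swap h)) (col_rot (col_swap T))).elim
      · rcases tp45 bad with h | h
        · exact col_rot (col_rot h)
        · exact (hF2 4 5 2 1 3 6 (by decide) h T).elim
      · rcases tp51 bad with h | h
        · exact (hF1 1 3 5 6 (by decide) (col_rot h) (T)).elim
        · exact col_rot h
    have W1 : Col3 p 2 3 5 := by
      rcases hB 2 3 5 (by decide) with bad | bad | bad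
      · rcases tp23 bad with h | h
        · exact h
        · exact (hF2 2 3 6 1 4 5 (by decide) h W0).elim
      · rcases tp35 bad with h | h
        · exact (hF1 1 3 5 6 (by decide) (col_rot (col_rot h)) (T)).elim
        · exact col_rot (col_rot h)
      · rcases tp52 bad with h | h
        · exact col_rot h
        · exact (hF2 5 2 4 1 3 6 (by decide) h T).elim
    have W2 : Col3 p 2 4 6 := by
      rcases hB 2 4 6 (by decide) with bad | bad | bad
      · rcases tp24 bad with h | h
        · exact (hF2 2 4 5 1 3 6 (by decide) h T).elim
        · exact h
      · rcases tp46 bad with h | h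
        · exact (hF2 4 6 1 2 3 5 (by decide) h W1).elim
        · exact col_rot (col_rot h)
      · rcases tp62 bad with h | h
        · exact (hF2 6 2 3 1 4 5 (by decide) h W0).elim
        · exact col_rot h
    exact fano_contra (p 0) (p 1) (p 2) (p 3) (p 4) (p 5) (p 6)
      (hne 1 2 (by decide)) (hne 1 3 (by decide)) (hne 1 5 (by decide)) (hne 3 5 (by decide)) (hne 3 4 (by decide)) (hne 5 6 (by decide)) (hne 0 1 (by decide)) (hne 2 3 (by decide)) (hne 2 5 (by decide)) (hne 4 5 (by decide))
      (fun hd => hF1 1 3 5 6 (by decide) ((collinear_of_dt_eq_zero hd)) (T))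
      (dt_eq_zero_of_collinear (col_rot K0)) (dt_eq_zero_of_collinear (col_rot K1)) (dt_eq_zero_of_collinear (col_rot K2)) (dt_eq_zero_of_collinear (T)) (dt_eq_zero_of_collinear (col_rot (col_swap W0))) (dt_eq_zero_of_collinear (col_rot W1)) (dt_eq_zero_of_collinear (W2))
  · -- case T = Col3 p 2 3 5
    have W0 : Col3 p 1 3 6 := by
      rcases hB 1 3 6 (by decide) with bad | bad | bad
      · rcases tp13 bad with h | h
        · exact (hF1 3 5 1 2 (by decide) (col_rot h) (col_rot T)).elim
        · exact h
      · rcases tp36 bad with h | h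
        · exact col_rot (col_rot h)
        · exact (hF1 2 3 6 5 (by decide) (col_rot (col_rot h)) (T)).elim
      · rcases tp61 bad with h | h
        · exact col_rot h
        · exact (hF2 6 1 4 2 3 5 (by decide) h T).elim
    have W1 : Col3 p 1 4 5 := by
      rcases hB 1 4 5 (by decide) with bad | bad | bad
      · rcases tp14 bad with h | h
        · exact h
        · exact (hF2 1 4 6 2 3 5 (by decide) h T).elim
      · rcases tp45 bad with h | h
        · exact col_rot (col_rot h)
        · exact (hF2 4 5 2 1 3 6 (by decide) h W0).elim
      · rcases tp51 bad with h | h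
        · exact (hF1 3 5 1 2 (by decide) (col_rot (col_rot h)) (col_rot T)).elim
        · exact col_rot h
    have W2 : Col3 p 2 4 6 := by
      rcases hB 2 4 6 (by decide) with bad | bad | bad
      · rcases tp24 bad with h | h
        · exact (hF2 2 4 5 1 3 6 (by decide) h W0).elim
        · exact h
      · rcases tp46 bad with h | h
        · exact (hF2 4 6 1 2 3 5 (by decide) h T).elim
        · exact col_rot (col_rot h)
      · rcases tp62 bad with h | h
        · exact (hF2 6 2 3 1 4 5 (by decide) h W1).elim
        · exact col_rot h
    exact fano_contra (p 0) (p 1) (p 2) (p 3) (p 4) (p 5) (p 6)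
      (hne 1 2 (by decide)) (hne 1 3 (by decide)) (hne 1 5 (by decide)) (hne 3 5 (by decide)) (hne 3 4 (by decide)) (hne 5 6 (by decide)) (hne 0 1 (by decide)) (hne 2 3 (by decide)) (hne 2 5 (by decide)) (hne 4 5 (by decide))
      (fun hd => hF1 3 5 1 2 (by decide) (col_rot (collinear_of_dt_eq_zero hd)) (col_rot T))
      (dt_eq_zero_of_collinear (col_rot K0)) (dt_eq_zero_of_collinear (col_rot K1)) (dt_eq_zero_of_collinear (col_rot K2)) (dt_eq_zero_of_collinear (W0)) (dt_eq_zero_of_collinear (col_rot (col_swap W1))) (dt_eq_zero_of_collinear (col_rot T)) (dt_eq_zero_of_collinear (W2))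
  · -- case T = Col3 p 1 4 5
    have W0 : Col3 p 1 3 6 := by
      rcases hB 1 3 6 (by decide) with bad | bad | bad
      · rcases tp13 bad with h | h
        · exact (hF1 1 5 3 4 (by decide) (col_rot (col_swap h)) (col_rot (col_swap T))).elim
        · exact h
      · rcases tp36 bad with h | h
        · exact col_rot (col_rot h)
        · exact (hF2 3 6 2 1 4 5 (by decide) h T).elim
      · rcases tp61 bad with h | h
        · exact col_rot h
        · exact (hF1 1 4 6 5 (by decide) (col_rot h) (T)).elim
    have W1 : Col3 p 2 3 5 := by
      rcases hB 2 3 5 (by decide) with bad | bad | bad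
      · rcases tp23 bad with h | h
        · exact h
        · exact (hF2 2 3 6 1 4 5 (by decide) h T).elim
      · rcases tp35 bad with h | h
        · exact (hF1 1 5 3 4 (by decide) (col_swap (col_rot h)) (col_rot (col_swap T))).elim
        · exact col_rot (col_rot h)
      · rcases tp52 bad with h | h
        · exact col_rot h
        · exact (hF2 5 2 4 1 3 6 (by decide) h W0).elim
    have W2 : Col3 p 2 4 6 := by
      rcases hB 2 4 6 (by decide) with bad | bad | bad
      · rcases tp24 bad with h | h
        · exact (hF2 2 4 5 1 3 6 (by decide) h W0).elim
        · exact h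
      · rcases tp46 bad with h | h
        · exact (hF2 4 6 1 2 3 5 (by decide) h W1).elim
        · exact col_rot (col_rot h)
      · rcases tp62 bad with h | h
        · exact (hF2 6 2 3 1 4 5 (by decide) h T).elim
        · exact col_rot h
    exact fano_contra (p 0) (p 1) (p 2) (p 3) (p 4) (p 5) (p 6)
      (hne 1 2 (by decide)) (hne 1 3 (by decide)) (hne 1 5 (by decide)) (hne 3 5 (by decide)) (hne 3 4 (by decide)) (hne 5 6 (by decide)) (hne 0 1 (by decide)) (hne 2 3 (by decide)) (hne 2 5 (by decide)) (hne 4 5 (by decide))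
      (fun hd => hF1 1 5 3 4 (by decide) (col_rot (col_swap (collinear_of_dt_eq_zero hd))) (col_rot (col_swap T)))
      (dt_eq_zero_of_collinear (col_rot K0)) (dt_eq_zero_of_collinear (col_rot K1)) (dt_eq_zero_of_collinear (col_rot K2)) (dt_eq_zero_of_collinear (W0)) (dt_eq_zero_of_collinear (col_rot (col_swap T))) (dt_eq_zero_of_collinear (col_rot W1)) (dt_eq_zero_of_collinear (W2))
end

section
/- Let n ≥ 2 and let p₁, p₂, p₃ ∈ ℂⁿ be three points that are not collinear. Let L denote the complex affine line through p₁ and p₂. Let p₄ ∈ L with p₄ ≠ p₁ and p₄ ≠ p₂, and let p ∈ ℂⁿ with p ∉ L and p ≠ p₃. Then at least one of the three sets {p₁, p₂, p₃, p}, {p₁, p₄, p₃, p}, {p₂, p₄, p₃, p} contains no three collinear points. -/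
/-- A set `S ⊆ ℂⁿ` contains no three collinear points. -/
def NoThreeCollinearPoints {n : ℕ} (S : Set (Fin n → ℂ)) : Prop :=
  ∀ x ∈ S, ∀ y ∈ S, ∀ z ∈ S, x ≠ y → x ≠ z → y ≠ z →
    ¬ Collinear ℂ ({x, y, z} : Set (Fin n → ℂ))

private lemma triple_subset_tac {n : ℕ} {s t : Set (Fin n → ℂ)} (h : s ⊆ t)
    (hc : Collinear ℂ t) : Collinear ℂ s := hc.subset h

set_option maxHeartbeats 2000000 in
lemma no3_of_triples {n : ℕ} (a b c d : Fin n → ℂ)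
    (h1 : ¬ Collinear ℂ ({a, b, c} : Set (Fin n → ℂ)))
    (h2 : ¬ Collinear ℂ ({a, b, d} : Set (Fin n → ℂ)))
    (h3 : ¬ Collinear ℂ ({a, c, d} : Set (Fin n → ℂ)))
    (h4 : ¬ Collinear ℂ ({b, c, d} : Set (Fin n → ℂ))) :
    NoThreeCollinearPoints ({a, b, c, d} : Set (Fin n → ℂ)) := by
  intro x hx y hy z hz hxy hxz hyz hcol
  simp only [Set.mem_insert_iff, Set.mem_singleton_iff] at hx hy hz
  rcases hx with rfl | rfl | rfl | rfl <;> rcases hy with rfl | rfl | rfl | rfl <;>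
    rcases hz with rfl | rfl | rfl | rfl <;>
    first
      | exact hxy rfl
      | exact hxz rfl
      | exact hyz rfl
      | (refine h1 (hcol.subset fun w hw => ?_); simp only [Set.mem_insert_iff,
          Set.mem_singleton_iff] at hw ⊢; tauto)
      | (refine h2 (hcol.subset fun w hw => ?_); simp only [Set.mem_insert_iff,
          Set.mem_singleton_iff] at hw ⊢; tauto)
      | (refine h3 (hcol.subset fun w hw => ?_); simp only [Set.mem_insert_iff,
          Set.mem_singleton_iff] at hw ⊢; tauto)
      | (refine h4 (hcol.subset fun w hw => ?_); simp only [Set.mem_insert_iff,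
          Set.mem_singleton_iff] at hw ⊢; tauto)

/-- Combinatorial step in the proof of Theorem 1.1 (ii): with `p₁, p₂, p₃` not
collinear, `L` the line through `p₁, p₂`, `p₄ ∈ L \ {p₁, p₂}`, and `p ∉ L`, `p ≠ p₃`,
at least one of `{p₁, p₂, p₃, p}`, `{p₁, p₄, p₃, p}`, `{p₂, p₄, p₃, p}` contains no
three collinear points. -/
theorem entire_green_statement_15 (n : ℕ) (hn : 2 ≤ n) (p₁ p₂ p₃ p₄ p : Fin n → ℂ)
    (h123 : ¬ Collinear ℂ ({p₁, p₂, p₃} : Set (Fin n → ℂ)))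
    (hp₄L : p₄ ∈ affineSpan ℂ ({p₁, p₂} : Set (Fin n → ℂ)))
    (h41 : p₄ ≠ p₁) (h42 : p₄ ≠ p₂)
    (hpL : p ∉ affineSpan ℂ ({p₁, p₂} : Set (Fin n → ℂ))) (hp3 : p ≠ p₃) :
    NoThreeCollinearPoints ({p₁, p₂, p₃, p} : Set (Fin n → ℂ)) ∨
    NoThreeCollinearPoints ({p₁, p₄, p₃, p} : Set (Fin n → ℂ)) ∨
    NoThreeCollinearPoints ({p₂, p₄, p₃, p} : Set (Fin n → ℂ)) := by
  set L := affineSpan ℂ ({p₁, p₂} : Set (Fin n → ℂ)) with hLdef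
  have h1L : p₁ ∈ L := mem_affineSpan ℂ (by simp)
  have h2L : p₂ ∈ L := mem_affineSpan ℂ (by simp)
  have h12 : p₁ ≠ p₂ := ne₁₂_of_not_collinear h123
  -- key lemma: a point collinear with two distinct points of L lies in L
  have key : ∀ x y z : Fin n → ℂ, x ∈ L → y ∈ L → x ≠ y →
      Collinear ℂ ({x, y, z} : Set (Fin n → ℂ)) → z ∈ L := by
    intro x y z hx hy hxy hc
    have hz : z ∈ affineSpan ℂ ({x, y} : Set (Fin n → ℂ)) :=
      hc.mem_affineSpan_of_mem_of_ne (by simp) (by simp) (by simp) hxy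
    refine affineSpan_le.2 ?_ hz
    intro w hw
    rcases hw with rfl | hw
    · exact hx
    · rw [Set.mem_singleton_iff] at hw; subst hw; exact hy
  have h3L : p₃ ∉ L := by
    intro h
    exact h123 ((collinear_insert_of_mem_affineSpan_pair h).subset
      (by intro w hw; simp only [Set.mem_insert_iff, Set.mem_singleton_iff] at hw ⊢; tauto))
  -- cannot have both {p₁,p₃,p} and {p₂,p₃,p} collinear
  have hnotboth : ¬ (Collinear ℂ ({p₁, p₃, p} : Set (Fin n → ℂ)) ∧
      Collinear ℂ ({p₂, p₃, p} : Set (Fin n → ℂ))) := by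
    rintro ⟨hA, hB⟩
    have hp3' : p₃ ≠ p := fun h => hp3 h.symm
    have h1M : p₁ ∈ affineSpan ℂ ({p₃, p} : Set (Fin n → ℂ)) :=
      hA.mem_affineSpan_of_mem_of_ne (by simp) (by simp) (by simp) hp3'
    have h2M : p₂ ∈ affineSpan ℂ ({p₃, p} : Set (Fin n → ℂ)) :=
      hB.mem_affineSpan_of_mem_of_ne (by simp) (by simp) (by simp) hp3'
    have h4col : Collinear ℂ ({p₁, p₂, p₃, p} : Set (Fin n → ℂ)) :=
      collinear_insert_insert_of_mem_affineSpan_pair h1M h2M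
    exact h123 (h4col.subset (by intro w hw; simp only [Set.mem_insert_iff,
      Set.mem_singleton_iff] at hw ⊢; tauto))
  -- {p₁,p₂,p} is never collinear
  have h12p : ¬ Collinear ℂ ({p₁, p₂, p} : Set (Fin n → ℂ)) :=
    fun h => hpL (key p₁ p₂ p h1L h2L h12 h)
  by_cases hA : Collinear ℂ ({p₁, p₃, p} : Set (Fin n → ℂ))
  · -- use {p₂, p₄, p₃, p}
    have hB : ¬ Collinear ℂ ({p₂, p₃, p} : Set (Fin n → ℂ)) := fun hB => hnotboth ⟨hA, hB⟩
    have h24 : p₂ ≠ p₄ := fun h => h42 h.symm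
    refine Or.inr (Or.inr (no3_of_triples _ _ _ _ ?_ ?_ ?_ ?_))
    · -- ¬ Collinear {p₂, p₄, p₃}
      exact fun h => h3L (key p₂ p₄ p₃ h2L hp₄L h24 h)
    · -- ¬ Collinear {p₂, p₄, p}
      exact fun h => hpL (key p₂ p₄ p h2L hp₄L h24 h)
    · -- ¬ Collinear {p₂, p₃, p}
      exact hB
    · -- ¬ Collinear {p₄, p₃, p}
      intro h
      have hp3' : p₃ ≠ p := fun h' => hp3 h'.symm
      have h4M : p₄ ∈ affineSpan ℂ ({p₃, p} : Set (Fin n → ℂ)) :=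
        h.mem_affineSpan_of_mem_of_ne (by simp) (by simp) (by simp) hp3'
      have h1M : p₁ ∈ affineSpan ℂ ({p₃, p} : Set (Fin n → ℂ)) :=
        hA.mem_affineSpan_of_mem_of_ne (by simp) (by simp) (by simp) hp3'
      have h4col : Collinear ℂ ({p₁, p₄, p₃, p} : Set (Fin n → ℂ)) :=
        collinear_insert_insert_of_mem_affineSpan_pair h1M h4M
      have h14p : Collinear ℂ ({p₁, p₄, p} : Set (Fin n → ℂ)) :=
        h4col.subset (by intro w hw; simp only [Set.mem_insert_iff,
          Set.mem_singleton_iff] at hw ⊢; tauto)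
      exact hpL (key p₁ p₄ p h1L hp₄L (fun h' => h41 h'.symm) h14p)
  · by_cases hB : Collinear ℂ ({p₂, p₃, p} : Set (Fin n → ℂ))
    · -- use {p₁, p₄, p₃, p}
      have h14 : p₁ ≠ p₄ := fun h => h41 h.symm
      refine Or.inr (Or.inl (no3_of_triples _ _ _ _ ?_ ?_ ?_ ?_))
      · exact fun h => h3L (key p₁ p₄ p₃ h1L hp₄L h14 h)
      · exact fun h => hpL (key p₁ p₄ p h1L hp₄L h14 h)
      · exact hA
      · intro h
        have hp3' : p₃ ≠ p := fun h' => hp3 h'.symm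
        have h4M : p₄ ∈ affineSpan ℂ ({p₃, p} : Set (Fin n → ℂ)) :=
          h.mem_affineSpan_of_mem_of_ne (by simp) (by simp) (by simp) hp3'
        have h2M : p₂ ∈ affineSpan ℂ ({p₃, p} : Set (Fin n → ℂ)) :=
          hB.mem_affineSpan_of_mem_of_ne (by simp) (by simp) (by simp) hp3'
        have h4col : Collinear ℂ ({p₂, p₄, p₃, p} : Set (Fin n → ℂ)) :=
          collinear_insert_insert_of_mem_affineSpan_pair h2M h4M
        have h24p : Collinear ℂ ({p₂, p₄, p} : Set (Fin n → ℂ)) :=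
          h4col.subset (by intro w hw; simp only [Set.mem_insert_iff,
            Set.mem_singleton_iff] at hw ⊢; tauto)
        exact hpL (key p₂ p₄ p h2L hp₄L (fun h' => h42 h'.symm) h24p)
    · -- use {p₁, p₂, p₃, p}
      exact Or.inl (no3_of_triples _ _ _ _ h123 h12p hA hB)
end
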